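/- arXiv:1801.08681 — 9 statements merged into one kernel-verified Lean document; each statement's English description precedes it below -/
import Mathlib

section
/- Let $p$ be a prime and let $G$ be a non-abelian split metacyclic $p$-group admitting two decompositions $G = \langle x\rangle \rtimes \langle y\rangle = \langle a\rangle \rtimes \langle b\rangle$ with $\langle x\rangle, \langle a\rangle$ normal cyclic subgroups. Then $\langle x\rangle \cong \langle a\rangle$ (and hence $\langle y\rangle \cong \langle b\rangle$). -/
open Finset Subgroup

/-!
Write `G = ⟨x⟩ ⋊ ⟨y⟩` with `|x| = p ^ m`, `|y| = p ^ n`, and let `|G'| = p ^ c`. Since `G/⟨x⟩` is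
cyclic, `G' ≤ ⟨x⟩`, so in the abelianization `x` has order `p ^ (m - c)` while `y` keeps order
`p ^ n`. Hence `|G| = p ^ (m + n)`, `exp G^ab = p ^ max (m - c) n`, and `exp G = p ^ max m n`; the
last one because `(x^i y^j)^k = x^(i (1 + A + ⋯ + A^(k-1))) y^(jk)` where `y^j` acts on `⟨x⟩` as
`A`-th power with `A^(p^n) ≡ 1 mod p^m`, which forces `p^m` to divide that geometric sum for
`k = p ^ max m n`. The order and exponent of `G` determine `{m, n}`. If a second decomposition
swapped them, with `m < n`, it would give `exp G^ab = p ^ max (n - c) m < p ^ n`, because `c ≥ 1`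
for non-abelian `G`, while the first gives `exp G^ab = p ^ n`.
-/

lemma geom_sum_range_mul {R : Type*} [CommSemiring R] (A : R) (a b : ℕ) :
    ∑ t ∈ range (a * b), A ^ t = (∑ t ∈ range a, A ^ t) * ∑ r ∈ range b, (A ^ a) ^ r := by
  induction b with
  | zero => simp
  | succ b ih =>
    rw [Nat.mul_succ, sum_range_add, ih, sum_range_succ, mul_add, sum_mul _ _ ((A ^ a) ^ b)]
    congr 1
    exact sum_congr rfl fun t _ => by rw [pow_add, ← pow_mul, mul_comm]

lemma Nat.ModEq.geom_sum {A q : ℕ} (hA : A ≡ 1 [MOD q]) (k : ℕ) :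
    ∑ t ∈ range k, A ^ t ≡ k [MOD q] :=
  (Nat.ModEq.sum fun t _ => hA.pow t).trans (by simpa using Nat.ModEq.refl k)

lemma pow_dvd_geom_sum_of_modEq_one {p A : ℕ} (hA : A ≡ 1 [MOD p]) (e : ℕ) :
    p ^ e ∣ ∑ t ∈ range (p ^ e), A ^ t := by
  induction e with
  | zero => simp
  | succ e ih =>
    rw [pow_succ, geom_sum_range_mul]
    refine mul_dvd_mul ih (Nat.modEq_zero_iff_dvd.mp ?_)
    exact ((hA.pow _).trans (by rw [one_pow])).geom_sum p |>.trans
      (Nat.modEq_zero_iff_dvd.mpr dvd_rfl)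

lemma pow_dvd_geom_sum_of_pow_modEq_one {p A m n e : ℕ} (hp : p.Prime)
    (hA : A ^ p ^ n ≡ 1 [MOD p ^ m]) (hm : m ≤ e) (hn : n ≤ e) :
    p ^ m ∣ ∑ t ∈ range (p ^ e), A ^ t := by
  rcases m.eq_zero_or_pos with rfl | hm0
  · simp
  have hA1 : A ≡ 1 [MOD p] := by
    have := Fact.mk hp
    have := (ZMod.natCast_eq_natCast_iff _ _ _).mpr (hA.of_dvd (dvd_pow_self p hm0.ne'))
    push_cast at this
    rwa [ZMod.pow_card_pow, ← Nat.cast_one, ZMod.natCast_eq_natCast_iff] at this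
  obtain ⟨u, hu⟩ := pow_dvd_geom_sum_of_modEq_one hA1 n
  have hsplit : ∑ t ∈ range (p ^ e), A ^ t
      = (∑ t ∈ range (p ^ n), A ^ t) * ∑ r ∈ range (p ^ (e - n)), (A ^ p ^ n) ^ r := by
    rw [← geom_sum_range_mul, ← pow_add, Nat.add_sub_cancel' hn]
  rw [hsplit, hu, ← Nat.modEq_zero_iff_dvd]
  calc p ^ n * u * ∑ r ∈ range (p ^ (e - n)), (A ^ p ^ n) ^ r
      ≡ p ^ n * u * p ^ (e - n) [MOD p ^ m] := (hA.geom_sum _).mul_left _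
    _ = p ^ e * u := by rw [mul_right_comm, ← pow_add, Nat.add_sub_cancel' hn]
    _ ≡ 0 [MOD p ^ m] := Nat.modEq_zero_iff_dvd.mpr (dvd_mul_of_dvd_left (pow_dvd_pow p hm) u)

lemma Monoid.exponent_eq_pow_max {M : Type*} [Monoid M] {g h : M} {p m n : ℕ}
    (hg : orderOf g = p ^ m) (hh : orderOf h = p ^ n) (hM : ∀ z : M, z ^ p ^ max m n = 1) :
    Monoid.exponent M = p ^ max m n := by
  refine Nat.dvd_antisymm (Monoid.exponent_dvd_of_forall_pow_eq_one hM) ?_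
  rcases le_total m n with hmn | hnm
  · rw [max_eq_right hmn, ← hh]
    exact Monoid.order_dvd_exponent h
  · rw [max_eq_left hnm, ← hg]
    exact Monoid.order_dvd_exponent g

section

variable {G : Type*} [Group G]

lemma conj_pow_eq_pow_pow {u z : G} {A : ℕ} (h : z * u * z⁻¹ = u ^ A) (k : ℕ) :
    z ^ k * u * (z ^ k)⁻¹ = u ^ A ^ k := by
  induction k with
  | zero => simp
  | succ k ih =>
    rw [pow_succ', pow_succ, pow_mul, ← ih, conj_pow, ← h]
    group

lemma mul_pow_eq_pow_geom_sum_mul_pow {u z : G} {A : ℕ} (h : z * u * z⁻¹ = u ^ A) (k : ℕ) :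
    (u * z) ^ k = u ^ (∑ t ∈ range k, A ^ t) * z ^ k := by
  induction k with
  | zero => simp
  | succ k ih =>
    have hmove : z * u ^ (∑ t ∈ range k, A ^ t) = u ^ (A * ∑ t ∈ range k, A ^ t) * z := by
      rw [pow_mul, ← h, conj_pow]
      group
    rw [pow_succ', ih, geom_sum_succ, pow_succ, pow_succ' z]
    simp only [mul_assoc]
    rw [← mul_assoc z, hmove]
    group

lemma orderOf_of_mul_card_commutator {x : G} (hC : commutator G ≤ zpowers x) :
    orderOf (Abelianization.of x) * Nat.card (commutator G) = orderOf x := by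
  let ψ := (Abelianization.of : G →* Abelianization G).domRestrict (zpowers x)
  have hker : ψ.ker ≃* commutator G := by
    rw [MonoidHom.ker_domRestrict, Abelianization.ker_of]
    exact subgroupOfEquivOfLe hC
  rw [← Nat.card_zpowers, ← Nat.card_zpowers, ← MonoidHom.map_zpowers,
    ← MonoidHom.domRestrict_range, ← Nat.card_congr hker.toEquiv, mul_comm, ← index_ker,
    card_mul_index]

end

/-- `G = ⟨x⟩ ⋊ ⟨y⟩`. -/
structure IsSplitMetacyclicPair {G : Type*} [Group G] (x y : G) : Prop where
  normal : (zpowers x).Normal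
  sup_eq_top : zpowers x ⊔ zpowers y = ⊤
  inf_eq_bot : zpowers x ⊓ zpowers y = ⊥

namespace IsSplitMetacyclicPair

variable {G : Type*} [Group G] {x y : G}

lemma isComplement' (h : IsSplitMetacyclicPair x y) : IsComplement' (zpowers x) (zpowers y) := by
  have := h.normal
  refine isComplement'_of_disjoint_and_mul_eq_univ (disjoint_iff.mpr h.inf_eq_bot) ?_
  rw [← normal_mul, h.sup_eq_top, coe_top]

lemma card_eq (h : IsSplitMetacyclicPair x y) : Nat.card G = orderOf x * orderOf y := by
  rw [← h.isComplement'.card_mul_card, Nat.card_zpowers, Nat.card_zpowers]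

lemma commutator_le (h : IsSplitMetacyclicPair x y) : commutator G ≤ zpowers x :=
  have := h.normal
  Normal.commutator_le_of_self_sup_commutative_eq_top h.sup_eq_top inferInstance

lemma orderOf_of_right (h : IsSplitMetacyclicPair x y) :
    orderOf (Abelianization.of y) = orderOf y := by
  refine Nat.dvd_antisymm (orderOf_map_dvd _ y) (orderOf_dvd_of_pow_eq_one ?_)
  have hker : y ^ orderOf (Abelianization.of y) ∈ commutator G := by
    rw [← Abelianization.ker_of, MonoidHom.mem_ker, map_pow, pow_orderOf_eq_one]
  have hmem : y ^ orderOf (Abelianization.of y) ∈ zpowers x ⊓ zpowers y :=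
    ⟨h.commutator_le hker, pow_mem (mem_zpowers y) _⟩
  rwa [h.inf_eq_bot, mem_bot] at hmem

variable [Finite G]

lemma exists_pow_mul_pow (h : IsSplitMetacyclicPair x y) (g : G) :
    ∃ i j : ℕ, x ^ i * y ^ j = g := by
  obtain ⟨⟨⟨u, hu⟩, ⟨v, hv⟩⟩, rfl⟩ := h.isComplement'.existsUnique g |>.exists
  obtain ⟨i, rfl⟩ := (isOfFinOrder_of_finite x).mem_powers_iff_mem_zpowers.mpr hu
  obtain ⟨j, rfl⟩ := (isOfFinOrder_of_finite y).mem_powers_iff_mem_zpowers.mpr hv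
  exact ⟨i, j, rfl⟩

lemma pow_pow_max_eq_one (h : IsSplitMetacyclicPair x y) {p m n : ℕ} (hp : p.Prime)
    (hm : orderOf x = p ^ m) (hn : orderOf y = p ^ n) (g : G) : g ^ p ^ max m n = 1 := by
  obtain ⟨s, hs⟩ : ∃ s : ℕ, x ^ s = y * x * y⁻¹ :=
    (isOfFinOrder_of_finite x).mem_powers_iff_mem_zpowers.mpr
      (h.normal.conj_mem x (mem_zpowers x) y)
  obtain ⟨i, j, rfl⟩ := h.exists_pow_mul_pow g
  have hconj : y ^ j * x * (y ^ j)⁻¹ = x ^ s ^ j := conj_pow_eq_pow_pow hs.symm j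
  have hperiod : (s ^ j) ^ p ^ n ≡ 1 [MOD p ^ m] := by
    rw [← hm, ← pow_eq_pow_iff_modEq, pow_one, ← conj_pow_eq_pow_pow hconj, ← pow_mul,
      mul_comm j, pow_mul, ← hn, pow_orderOf_eq_one, one_pow]
    group
  have hconj' : y ^ j * x ^ i * (y ^ j)⁻¹ = (x ^ i) ^ s ^ j := by
    rw [← conj_pow, hconj, ← pow_mul, ← pow_mul, mul_comm]
  have hx : x ^ ∑ t ∈ range (p ^ max m n), (s ^ j) ^ t = 1 :=
    orderOf_dvd_iff_pow_eq_one.mp <| hm ▸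
      pow_dvd_geom_sum_of_pow_modEq_one hp hperiod (le_max_left m n) (le_max_right m n)
  have hy : y ^ p ^ max m n = 1 :=
    orderOf_dvd_iff_pow_eq_one.mp <| hn ▸ pow_dvd_pow p (le_max_right m n)
  rw [mul_pow_eq_pow_geom_sum_mul_pow hconj', pow_right_comm, hx, pow_right_comm, hy, one_pow,
    one_pow, one_mul]

lemma exponent_eq (h : IsSplitMetacyclicPair x y) {p m n : ℕ} (hp : p.Prime)
    (hm : orderOf x = p ^ m) (hn : orderOf y = p ^ n) : Monoid.exponent G = p ^ max m n :=
  Monoid.exponent_eq_pow_max hm hn (h.pow_pow_max_eq_one hp hm hn)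

lemma exponent_abelianization_eq (h : IsSplitMetacyclicPair x y) {p d n : ℕ}
    (hd : orderOf (Abelianization.of x) = p ^ d) (hn : orderOf y = p ^ n) :
    Monoid.exponent (Abelianization G) = p ^ max d n := by
  rw [← h.orderOf_of_right] at hn
  refine Monoid.exponent_eq_pow_max hd hn fun q => QuotientGroup.induction_on q fun g => ?_
  obtain ⟨i, j, rfl⟩ := h.exists_pow_mul_pow g
  have hx := orderOf_dvd_iff_pow_eq_one.mp <| hd ▸ pow_dvd_pow p (le_max_left d n)
  have hy := orderOf_dvd_iff_pow_eq_one.mp <| hn ▸ pow_dvd_pow p (le_max_right d n)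
  change (Abelianization.of (x ^ i * y ^ j)) ^ p ^ max d n = 1
  rw [map_mul, map_pow, map_pow, mul_pow, pow_right_comm, hx, pow_right_comm, hy, one_pow,
    one_pow, one_mul]

lemma exists_invariants (h : IsSplitMetacyclicPair x y) {p : ℕ} [hp : Fact p.Prime]
    (hG : IsPGroup p G) :
    ∃ m n d : ℕ, orderOf x = p ^ m ∧ Nat.card G = p ^ (m + n) ∧
      Monoid.exponent G = p ^ max m n ∧ p ^ d * Nat.card (commutator G) = p ^ m ∧
      Monoid.exponent (Abelianization G) = p ^ max d n := by
  obtain ⟨m, hm⟩ := IsPGroup.iff_orderOf.mp hG x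
  obtain ⟨n, hn⟩ := IsPGroup.iff_orderOf.mp hG y
  obtain ⟨d, hd⟩ := IsPGroup.iff_orderOf.mp
    (hG.of_surjective Abelianization.of (QuotientGroup.mk'_surjective _)) (Abelianization.of x)
  refine ⟨m, n, d, hm, ?_, h.exponent_eq hp.out hm hn, ?_, h.exponent_abelianization_eq hd hn⟩
  · rw [h.card_eq, hm, hn, pow_add]
  · rw [← hd, orderOf_of_mul_card_commutator h.commutator_le, hm]

end IsSplitMetacyclicPair

/-- Let `p` be a prime and `G` a non-abelian split metacyclic `p`-group with two
decompositions `G = ⟨x⟩ ⋊ ⟨y⟩ = ⟨a⟩ ⋊ ⟨b⟩` (with `⟨x⟩, ⟨a⟩` normal).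
Then `⟨x⟩ ≅ ⟨a⟩`. -/
theorem stmt_4 (p : ℕ) [Fact p.Prime] (G : Type*) [Group G] [Finite G]
    (hp : IsPGroup p G)
    (hna : ¬ ∀ g h : G, g * h = h * g)
    (x y a b : G)
    (hNx : (Subgroup.zpowers x).Normal)
    (hx1 : Subgroup.zpowers x ⊔ Subgroup.zpowers y = ⊤)
    (hx2 : Subgroup.zpowers x ⊓ Subgroup.zpowers y = ⊥)
    (hNa : (Subgroup.zpowers a).Normal)
    (ha1 : Subgroup.zpowers a ⊔ Subgroup.zpowers b = ⊤)
    (ha2 : Subgroup.zpowers a ⊓ Subgroup.zpowers b = ⊥) :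
    Nonempty ((Subgroup.zpowers x) ≃* (Subgroup.zpowers a)) := by
  obtain ⟨m, n, d, hxm, hcard, hexp, hcomm, hexpab⟩ :=
    IsSplitMetacyclicPair.exists_invariants ⟨hNx, hx1, hx2⟩ hp
  obtain ⟨m', n', d', ham, hcard', hexp', hcomm', hexpab'⟩ :=
    IsSplitMetacyclicPair.exists_invariants ⟨hNa, ha1, ha2⟩ hp
  obtain ⟨c, hc⟩ := IsPGroup.iff_card.mp (hp.to_subgroup (commutator G))
  have hc0 : c ≠ 0 := by
    rintro rfl
    have : IsMulCommutative G := (commutator_eq_bot_iff G).mp (card_eq_one.mp hc)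
    exact hna mul_comm'
  rw [hc, ← pow_add] at hcomm hcomm'
  have hinj := Nat.pow_right_injective (Fact.out : p.Prime).two_le
  have hdm : d + c = m := hinj hcomm
  have hdm' : d' + c = m' := hinj hcomm'
  have hsum : m + n = m' + n' := hinj (hcard.symm.trans hcard')
  have hmax : max m n = max m' n' := hinj (hexp.symm.trans hexp')
  have hmaxab : max d n = max d' n' := hinj (hexpab.symm.trans hexpab')
  have hmm : m = m' := by omega
  exact ⟨mulEquivOfCyclicCardEq (by rw [Nat.card_zpowers, Nat.card_zpowers, hxm, ham, hmm])⟩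
end

section
/- Let $p$ be a prime and $G$ a non-abelian split metacyclic $p$-group with $G = \langle x\rangle \rtimes \langle y\rangle = \langle a\rangle \rtimes \langle b\rangle$, where $\langle x\rangle$ and $\langle a\rangle$ are normal. If $G$ is absolutely split with respect to $\langle a\rangle$, then $G$ is also absolutely split with respect to $\langle x\rangle$. -/
/-!
Since `G / ⟨x⟩` and `G / ⟨a⟩` are cyclic, the derived subgroup lies in `⟨x⟩ ∩ ⟨a⟩`, and it is
nontrivial because `G` is non-abelian. Hence the cyclic `p`-groups `⟨x⟩` and `⟨a⟩` share their
unique subgroup of order `p`, so a subgroup meets `⟨x⟩` trivially iff it meets `⟨a⟩` trivially.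
Given `g` with `⟨g⟩ ∩ ⟨x⟩ = 1`, absolute splitting over `⟨a⟩` yields `c` with `g ∈ ⟨c⟩` and
`G = ⟨a⟩ ⋊ ⟨c⟩`. Then `⟨c⟩ ∩ ⟨x⟩ = 1` and `⟨y⟩ ∩ ⟨a⟩ = 1`, and comparing orders in
`|a||c| = |G| = |x||y|` forces `|c| = |y|`, so `G = ⟨x⟩ ⋊ ⟨c⟩`.
-/

namespace Subgroup

variable {G : Type*} [Group G]

theorem zpowers_pow_eq_zpowers_pow_gcd (x : G) (i : ℕ) :
    zpowers (x ^ i) = zpowers (x ^ (orderOf x).gcd i) := by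
  refine le_antisymm (zpowers_le_of_mem ?_) (zpowers_le_of_mem ?_)
  · have hi := Nat.mul_div_cancel' (Nat.gcd_dvd_right (orderOf x) i)
    simpa only [← pow_mul, hi] using
      pow_mem (mem_zpowers (x ^ (orderOf x).gcd i)) (i / (orderOf x).gcd i)
  · have hbezout := Nat.gcd_eq_gcd_ab (orderOf x) i
    rw [← zpow_natCast x ((orderOf x).gcd i), hbezout, zpow_add, zpow_mul, zpow_natCast,
      pow_orderOf_eq_one, one_zpow, one_mul, zpow_mul, zpow_natCast]
    exact zpow_mem_zpowers _ _

theorem zpowers_eq_zpowers_of_orderOf_eq {x u w : G} (hx : IsOfFinOrder x)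
    (hu : u ∈ zpowers x) (hw : w ∈ zpowers x) (h : orderOf u = orderOf w) :
    zpowers u = zpowers w := by
  obtain ⟨i, rfl⟩ := hx.mem_powers_iff_mem_zpowers.2 hu
  obtain ⟨j, rfl⟩ := hx.mem_powers_iff_mem_zpowers.2 hw
  have hpos := hx.orderOf_pos.ne'
  have hgcd : (orderOf x).gcd i = (orderOf x).gcd j := by
    rw [hx.orderOf_pow, hx.orderOf_pow] at h
    rw [← Nat.div_div_self (Nat.gcd_dvd_left _ i) hpos, h,
      Nat.div_div_self (Nat.gcd_dvd_left _ j) hpos]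
  rw [zpowers_pow_eq_zpowers_pow_gcd, hgcd, ← zpowers_pow_eq_zpowers_pow_gcd]

theorem isComplement'_of_sup_eq_top {N K : Subgroup G} [N.Normal] (hsup : N ⊔ K = ⊤)
    (hdisj : Disjoint N K) : IsComplement' N K :=
  isComplement'_of_disjoint_and_mul_eq_univ hdisj (by rw [← normal_mul, hsup, coe_top])

theorem card_mul_card_le_of_disjoint [Finite G] {H K : Subgroup G} (h : Disjoint H K) :
    Nat.card H * Nat.card K ≤ Nat.card G := by
  rw [← Nat.card_prod]
  exact Nat.card_le_card_of_injective _ (mul_injective_of_disjoint h)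

theorem IsComplement'.isComplement'_of_disjoint [Finite G] {N M K L : Subgroup G}
    (hNK : IsComplement' N K) (hML : IsComplement' M L) (hNL : Disjoint N L)
    (hMK : Disjoint M K) : IsComplement' M K := by
  have hNK' := hNK.card_mul_card
  have hML' := hML.card_mul_card
  have hNL' := card_mul_card_le_of_disjoint hNL
  have hMK' := card_mul_card_le_of_disjoint hMK
  have hL : Nat.card L ≤ Nat.card K :=
    Nat.le_of_mul_le_mul_left (hNK' ▸ hNL') Nat.card_pos
  have hK : Nat.card K ≤ Nat.card L :=
    Nat.le_of_mul_le_mul_left (hML' ▸ hMK') Nat.card_pos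
  refine isComplement'_of_card_mul_and_disjoint ?_ hMK
  rw [le_antisymm hK hL, hML']

end Subgroup

namespace IsPGroup

variable {p : ℕ} [Fact p.Prime] {G : Type*} [Group G]

theorem exists_orderOf_pow_eq_prime (hG : IsPGroup p G) {g : G} (hg : g ≠ 1) :
    ∃ n : ℕ, orderOf (g ^ n) = p :=
  ⟨_, orderOf_pow_orderOf_div (hG.isOfFinOrder (Fact.out : p.Prime).ne_zero g).orderOf_pos.ne'
    (hG.dvd_orderOf hg)⟩

theorem disjoint_zpowers_iff_notMem (hG : IsPGroup p G) {x z : G} (hz : z ∈ Subgroup.zpowers x)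
    (hzp : orderOf z = p) (K : Subgroup G) : Disjoint K (Subgroup.zpowers x) ↔ z ∉ K := by
  refine ⟨fun h hzK => ?_, fun hzK => ?_⟩
  · rw [Subgroup.disjoint_def.1 h hzK hz, orderOf_one] at hzp
    exact (Fact.out : p.Prime).ne_one hzp.symm
  · refine Subgroup.disjoint_def.2 fun {w} hwK hwX => ?_
    by_contra hw
    obtain ⟨n, hn⟩ := hG.exists_orderOf_pow_eq_prime hw
    have hzw : Subgroup.zpowers z = Subgroup.zpowers (w ^ n) :=
      Subgroup.zpowers_eq_zpowers_of_orderOf_eq (hG.isOfFinOrder (Fact.out : p.Prime).ne_zero x)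
        hz (pow_mem hwX n) (hzp.trans hn.symm)
    exact hzK (Subgroup.zpowers_le_of_mem (pow_mem hwK n) (hzw ▸ Subgroup.mem_zpowers z))

end IsPGroup

open Subgroup commutatorElement in
theorem stmt_5_general (p : ℕ) [Fact p.Prime] (G : Type*) [Group G] [Finite G]
    (hp : IsPGroup p G)
    (hna : ¬ ∀ g h : G, g * h = h * g)
    (x y a b : G)
    (hNx : (Subgroup.zpowers x).Normal)
    (hx1 : Subgroup.zpowers x ⊔ Subgroup.zpowers y = ⊤)
    (hx2 : Subgroup.zpowers x ⊓ Subgroup.zpowers y = ⊥)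
    (hNa : (Subgroup.zpowers a).Normal)
    (ha1 : Subgroup.zpowers a ⊔ Subgroup.zpowers b = ⊤)
    (habs : ∀ g : G, Subgroup.zpowers g ⊓ Subgroup.zpowers a = ⊥ →
      ∃ c : G, g ∈ Subgroup.zpowers c ∧
        Subgroup.zpowers a ⊔ Subgroup.zpowers c = ⊤ ∧
        Subgroup.zpowers a ⊓ Subgroup.zpowers c = ⊥) :
    ∀ g : G, Subgroup.zpowers g ⊓ Subgroup.zpowers x = ⊥ →
      ∃ c : G, g ∈ Subgroup.zpowers c ∧
        Subgroup.zpowers x ⊔ Subgroup.zpowers c = ⊤ ∧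
        Subgroup.zpowers x ⊓ Subgroup.zpowers c = ⊥ := by
  push Not at hna
  obtain ⟨u, v, huv⟩ := hna
  have hk : ⁅u, v⁆ ≠ 1 := mt commutatorElement_eq_one_iff_mul_comm.1 huv
  have hkG : ⁅u, v⁆ ∈ commutator G := commutator_mem_commutator (mem_top u) (mem_top v)
  obtain ⟨n, hz⟩ := hp.exists_orderOf_pow_eq_prime hk
  have hzx := pow_mem (Normal.commutator_le_of_self_sup_commutative_eq_top hx1 inferInstance hkG) n
  have hza := pow_mem (Normal.commutator_le_of_self_sup_commutative_eq_top ha1 inferInstance hkG) n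
  have hxa (K : Subgroup G) : Disjoint K (zpowers x) ↔ Disjoint K (zpowers a) := by
    rw [hp.disjoint_zpowers_iff_notMem hzx hz, hp.disjoint_zpowers_iff_notMem hza hz]
  intro g hg
  obtain ⟨c, hgc, hac_sup, hac_inf⟩ := habs g (disjoint_iff.1 ((hxa _).1 (disjoint_iff.2 hg)))
  have hxy : Disjoint (zpowers x) (zpowers y) := disjoint_iff.2 hx2
  have hac : Disjoint (zpowers a) (zpowers c) := disjoint_iff.2 hac_inf
  have hxc : IsComplement' (zpowers x) (zpowers c) :=
    (isComplement'_of_sup_eq_top hac_sup hac).isComplement'_of_disjoint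
      (isComplement'_of_sup_eq_top hx1 hxy) ((hxa _).1 hxy.symm).symm ((hxa _).2 hac.symm).symm
  exact ⟨c, hgc, hxc.sup_eq_top, disjoint_iff.1 hxc.disjoint⟩

/-- Let `p` be a prime and `G` a non-abelian split metacyclic `p`-group with
`G = ⟨x⟩ ⋊ ⟨y⟩ = ⟨a⟩ ⋊ ⟨b⟩` (with `⟨x⟩, ⟨a⟩` normal). If `G` is absolutely split
with respect to `⟨a⟩`, then `G` is also absolutely split with respect to `⟨x⟩`. -/
theorem stmt_5 (p : ℕ) [Fact p.Prime] (G : Type*) [Group G] [Finite G]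
    (hp : IsPGroup p G)
    (hna : ¬ ∀ g h : G, g * h = h * g)
    (x y a b : G)
    (hNx : (Subgroup.zpowers x).Normal)
    (hx1 : Subgroup.zpowers x ⊔ Subgroup.zpowers y = ⊤)
    (hx2 : Subgroup.zpowers x ⊓ Subgroup.zpowers y = ⊥)
    (hNa : (Subgroup.zpowers a).Normal)
    (ha1 : Subgroup.zpowers a ⊔ Subgroup.zpowers b = ⊤)
    (ha2 : Subgroup.zpowers a ⊓ Subgroup.zpowers b = ⊥)
    (habs : ∀ g : G, Subgroup.zpowers g ⊓ Subgroup.zpowers a = ⊥ →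
      ∃ c : G, g ∈ Subgroup.zpowers c ∧
        Subgroup.zpowers a ⊔ Subgroup.zpowers c = ⊤ ∧
        Subgroup.zpowers a ⊓ Subgroup.zpowers c = ⊥) :
    ∀ g : G, Subgroup.zpowers g ⊓ Subgroup.zpowers x = ⊥ →
      ∃ c : G, g ∈ Subgroup.zpowers c ∧
        Subgroup.zpowers x ⊔ Subgroup.zpowers c = ⊤ ∧
        Subgroup.zpowers x ⊓ Subgroup.zpowers c = ⊥ :=
  stmt_5_general p G hp hna x y a b hNx hx1 hx2 hNa ha1 habs
end

section
/- For any integer $n \geq 1$ and any integer $i$ with $0 \leq i \leq n$, the power $2^{n-i}$ divides the binomial coefficient $\binom{2^n}{i+1}$. -/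
/-!
By Kummer's theorem, `v_p (C(p^n, k)) = n - v_p(k)` for `0 < k ≤ p^n`. For `p = 2` and `k = i + 1`
we have `v_2(i + 1) ≤ i`, since `2^(v_2(i + 1)) ≤ i + 1`.
-/

theorem Nat.pow_sub_factorization_dvd_choose_prime_pow {p n k : ℕ} (hp : p.Prime)
    (hkn : k ≤ p ^ n) (hk0 : k ≠ 0) : p ^ (n - k.factorization p) ∣ choose (p ^ n) k := by
  rw [hp.pow_dvd_iff_le_factorization (choose_pos hkn).ne',
    factorization_choose_prime_pow hp hkn hk0]

/-- For any integer `n ≥ 1` and `0 ≤ i ≤ n`, `2^(n-i)` divides `C(2^n, i+1)`. -/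
theorem stmt_6 : ∀ n i : ℕ, 1 ≤ n → i ≤ n → 2 ^ (n - i) ∣ Nat.choose (2 ^ n) (i + 1) := by
  intro n i _ hi
  have hle : i + 1 ≤ 2 ^ n := (hi.trans_lt n.lt_two_pow_self).nat_succ_le
  have hval : (i + 1).factorization 2 ≤ i :=
    Nat.lt_succ_iff.mp (Nat.factorization_lt 2 i.succ_ne_zero)
  exact (Nat.pow_dvd_pow 2 (by omega)).trans
    (Nat.pow_sub_factorization_dvd_choose_prime_pow Nat.prime_two hle i.succ_ne_zero)
end

section
/- Let $G = \langle a, b \mid a^{2^{2r+s+t}} = 1, b^{2^{r+s}} = 1, a^b = a^{\varepsilon + 2^{r+t}}\rangle$ where $\varepsilon = \pm 1$, $r \geq 2$, $st = 0$. Let $1 \neq g \in G$ with $\langle g\rangle \cap \langle a\rangle = 1$ and $o(g) = 2^{r+s-k}$ for some $0 < k \leq r+s$. Then there exists $j$ with $2^{r+t+k} \mid j$ such that $\langle g\rangle = \langle b^{2^k} a^j\rangle$. -/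
/-!
Write `g = b^m a^z` and `e = ε + 2^(r+t)`, which is odd. Since `⟨g⟩ ∩ ⟨a⟩ = 1`, the elements `g` and
`b^m` have the same order in `G / ⟨a⟩`, hence in `G`, so `gcd(m, 2^(r+s)) = 2^k`. Thus `m` is even
and `b^(2^k) = (b^m)^u` for some `u`; then `g^u = b^(2^k) a^w` has the order of `b^(2^k)`, which is
`o(g)`, so it generates `⟨g⟩`. For `N = o(g) = 2^(r+s-k)` we have
`1 = g^N = b^(mN) a^(z(1 + e^m + ⋯ + e^(m(N-1))))`, and because `e^m ≡ 1 mod 4` the geometric sum is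
`2^(r+s-k)` times an odd number; so `2^(2r+s+t) ∣ z 2^(r+s-k)` gives `2^(r+t+k) ∣ z`, and `z ∣ w`.
-/

open Finset Subgroup Pointwise

theorem Int.four_dvd_pow_sub_one_of_odd_of_even {e : ℤ} (he : Odd e) {m : ℕ} (hm : Even m) :
    4 ∣ e ^ m - 1 := by
  obtain ⟨l, rfl⟩ := hm
  rw [← two_mul, pow_mul]
  exact (dvd_trans (by norm_num) (Int.eight_dvd_sq_sub_one_of_odd he)).trans
    (sub_one_dvd_pow_sub_one _ l)

theorem Int.exists_odd_geom_sum_two_pow {x : ℤ} (hx : 4 ∣ x - 1) (n : ℕ) :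
    ∃ w, Odd w ∧ ∑ i ∈ Finset.range (2 ^ n), x ^ i = 2 ^ n * w := by
  induction n with
  | zero => exact ⟨1, odd_one, by simp⟩
  | succ n ih =>
    obtain ⟨w, hw, hsum⟩ := ih
    -- the sum over `2^(n+1)` terms is `(1 + x^(2^n))` times the sum over `2^n` terms,
    -- and `1 + x^(2^n) ≡ 2 mod 4`
    obtain ⟨q, hq⟩ := hx.trans (sub_one_dvd_pow_sub_one x (2 ^ n))
    refine ⟨(2 * q + 1) * w, (odd_two_mul_add_one q).mul hw, ?_⟩
    rw [pow_succ, mul_two, sum_range_add]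
    simp_rw [pow_add, ← mul_sum, hsum]
    linear_combination 2 ^ n * w * hq

theorem Int.two_pow_dvd_of_two_pow_dvd_mul_geom_sum {x z : ℤ} (hx : 4 ∣ x - 1) {c n : ℕ}
    (h : 2 ^ (c + n) ∣ z * ∑ i ∈ Finset.range (2 ^ n), x ^ i) : 2 ^ c ∣ z := by
  obtain ⟨w, hw, hsum⟩ := Int.exists_odd_geom_sum_two_pow hx n
  rw [hsum, pow_add, mul_left_comm, mul_comm (2 ^ c)] at h
  have h' := (mul_dvd_mul_iff_left (pow_ne_zero n two_ne_zero)).mp h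
  exact (Int.isCoprime_two_left.mpr hw).pow_left.dvd_of_dvd_mul_right h'

section Group

variable {G : Type*} [Group G]

theorem pow_gcd_orderOf_mem_zpowers_pow (x : G) (m : ℕ) :
    x ^ (orderOf x).gcd m ∈ zpowers (x ^ m) := by
  refine ⟨Nat.gcdB (orderOf x) m, ?_⟩
  dsimp only
  rw [← zpow_natCast x ((orderOf x).gcd m), Nat.gcd_eq_gcd_ab, zpow_add, zpow_mul, zpow_natCast,
    pow_orderOf_eq_one, one_zpow, one_mul, zpow_mul, zpow_natCast]

theorem gcd_orderOf_eq_of_orderOf_pow_eq {x : G} (hx : IsOfFinOrder x) {m d : ℕ}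
    (hd : d ∣ orderOf x) (h : orderOf (x ^ m) = orderOf x / d) : (orderOf x).gcd m = d := by
  rw [hx.orderOf_pow] at h
  rw [← Nat.div_div_self (Nat.gcd_dvd_left _ m) hx.orderOf_pos.ne', h,
    Nat.div_div_self hd hx.orderOf_pos.ne']

theorem zpowers_pow_eq_of_orderOf_pow_eq {x : G} (hx : IsOfFinOrder x) {n : ℕ}
    (h : orderOf (x ^ n) = orderOf x) : zpowers (x ^ n) = zpowers x := by
  refine le_antisymm (zpowers_le.mpr (pow_mem (mem_zpowers x) n)) (zpowers_le.mpr ?_)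
  rw [mem_zpowers_pow_iff, Nat.gcd_comm]
  rw [hx.orderOf_pow, Nat.div_eq_self] at h
  exact h.resolve_left hx.orderOf_pos.ne'

theorem exists_nat_dvd_pow_eq_zpow {a : G} (ha : IsOfFinOrder a) {d : ℕ} {w : ℤ}
    (hd : (d : ℤ) ∣ w) : ∃ j : ℕ, d ∣ j ∧ a ^ j = a ^ w := by
  obtain ⟨q, rfl⟩ := hd
  obtain ⟨q', hq'⟩ := (ha.pow (n := d)).mem_powers_iff_mem_zpowers.mpr ⟨q, rfl⟩
  dsimp only at hq'
  exact ⟨d * q', dvd_mul_right d q', by rw [pow_mul, hq', zpow_mul, zpow_natCast]⟩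

theorem QuotientGroup.orderOf_mk_of_disjoint {N : Subgroup G} [N.Normal] {g : G}
    (h : Disjoint (zpowers g) N) : orderOf (g : G ⧸ N) = orderOf g :=
  orderOf_eq_orderOf_iff.mpr fun n => by
    rw [← QuotientGroup.mk_pow, QuotientGroup.eq_one_iff]
    exact ⟨fun hn => disjoint_iff_inf_le.mp h ⟨pow_mem (mem_zpowers g) n, hn⟩,
      fun hn => hn ▸ N.one_mem⟩

theorem orderOf_mul_of_disjoint {N : Subgroup G} [N.Normal] {x y : G} (hx : x ∈ N)
    (hyx : Disjoint (zpowers (y * x)) N) (hy : Disjoint (zpowers y) N) :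
    orderOf (y * x) = orderOf y := by
  rw [← QuotientGroup.orderOf_mk_of_disjoint hyx, ← QuotientGroup.orderOf_mk_of_disjoint hy,
    QuotientGroup.mk_mul, (QuotientGroup.eq_one_iff x).mpr hx, mul_one]

variable {a b : G}

theorem exists_pow_mul_zpow_eq (hN : (zpowers a).Normal) (hgen : zpowers a ⊔ zpowers b = ⊤)
    (hb : IsOfFinOrder b) (g : G) : ∃ (m : ℕ) (z : ℤ), b ^ m * a ^ z = g := by
  have hg : g ∈ ((zpowers b : Set G) * zpowers a) := by
    rw [← mul_normal, sup_comm, hgen]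
    trivial
  obtain ⟨_, hy, _, ⟨z, rfl⟩, rfl⟩ := hg
  obtain ⟨m, rfl⟩ := hb.mem_powers_iff_mem_zpowers.mpr hy
  exact ⟨m, z, rfl⟩

theorem zpow_mul_pow_eq_pow_mul_zpow {e : ℤ} (h : b⁻¹ * a * b = a ^ e) (n : ℕ) (z : ℤ) :
    a ^ z * b ^ n = b ^ n * a ^ (e ^ n * z) := by
  induction n generalizing z with
  | zero => simp
  | succ n ih =>
    have hb : a ^ z * b = b * a ^ (e * z) := by
      have hconj : (b⁻¹ * a * b) ^ z = b⁻¹ * a ^ z * b := by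
        simpa using conj_zpow (a := b⁻¹) (b := a) (i := z)
      rw [zpow_mul, ← h, hconj]
      group
    rw [pow_succ', ← mul_assoc, hb, mul_assoc, ih, ← mul_assoc, pow_succ e, mul_assoc (e ^ n)]

theorem mul_zpow_pow {c : G} {x : ℤ} (hc : ∀ z : ℤ, a ^ z * c = c * a ^ (x * z)) (z : ℤ)
    (n : ℕ) : (c * a ^ z) ^ n = c ^ n * a ^ (z * ∑ i ∈ Finset.range n, x ^ i) := by
  induction n with
  | zero => simp
  | succ n ih =>
    rw [pow_succ, ih, mul_assoc, ← mul_assoc (a ^ _), hc, geom_sum_succ, mul_add, mul_one,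
      zpow_add, pow_succ, mul_left_comm z]
    group

theorem two_pow_dvd_of_pow_mul_zpow_pow_eq_one {e : ℤ} (hconj : b⁻¹ * a * b = a ^ e)
    (he : Odd e) (hab : Disjoint (zpowers b) (zpowers a)) {c n : ℕ}
    (ha : orderOf a = 2 ^ (c + n)) {m : ℕ} (hm : Even m) {z : ℤ}
    (hg : (b ^ m * a ^ z) ^ 2 ^ n = 1) : (2 : ℤ) ^ c ∣ z := by
  refine Int.two_pow_dvd_of_two_pow_dvd_mul_geom_sum (n := n)
    (Int.four_dvd_pow_sub_one_of_odd_of_even he hm) ?_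
  rw [mul_zpow_pow (zpow_mul_pow_eq_pow_mul_zpow hconj m)] at hg
  have ha_eq := (disjoint_iff_mul_eq_one.mp hab (pow_mem (pow_mem (mem_zpowers b) m) _)
    (zpow_mem (mem_zpowers a) _) hg).2
  exact_mod_cast ha ▸ orderOf_dvd_iff_zpow_eq_one.mpr ha_eq

end Group

theorem stmt_8_general (G : Type*) [Group G] (a b : G) (r s t : ℕ) (ε : ℤ)
    (hr : 2 ≤ r) (hε : ε = 1 ∨ ε = -1)
    (ha : orderOf a = 2 ^ (2 * r + s + t)) (hb : orderOf b = 2 ^ (r + s))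
    (hN : (Subgroup.zpowers a).Normal)
    (hgen : Subgroup.zpowers a ⊔ Subgroup.zpowers b = ⊤)
    (hint : Subgroup.zpowers a ⊓ Subgroup.zpowers b = ⊥)
    (hconj : b⁻¹ * a * b = a ^ (ε + 2 ^ (r + t)))
    (g : G)
    (hga : Subgroup.zpowers g ⊓ Subgroup.zpowers a = ⊥)
    (k : ℕ) (hk0 : 0 < k) (hk : k ≤ r + s)
    (hog : orderOf g = 2 ^ (r + s - k)) :
    ∃ j : ℕ, 2 ^ (r + t + k) ∣ j ∧
      Subgroup.zpowers g = Subgroup.zpowers (b ^ 2 ^ k * a ^ j) := by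
  have hfin_a : IsOfFinOrder a := orderOf_pos_iff.mp (ha ▸ by positivity)
  have hfin_b : IsOfFinOrder b := orderOf_pos_iff.mp (hb ▸ by positivity)
  have hfin_g : IsOfFinOrder g := orderOf_pos_iff.mp (hog ▸ by positivity)
  have he : Odd (ε + 2 ^ (r + t)) :=
    (by rcases hε with rfl | rfl <;> decide : Odd ε).add_even
      ((Int.even_pow' (by omega)).mpr even_two)
  have hab : Disjoint (zpowers b) (zpowers a) := (disjoint_iff.mpr hint).symm
  have hbn (n : ℕ) : Disjoint (zpowers (b ^ n)) (zpowers a) :=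
    hab.mono_left (zpowers_le.mpr (pow_mem (mem_zpowers b) n))
  obtain ⟨m, z, rfl⟩ := exists_pow_mul_zpow_eq hN hgen hfin_b g
  have hord_bm : orderOf (b ^ m) = 2 ^ (r + s - k) := by
    rw [← hog, orderOf_mul_of_disjoint (zpow_mem (mem_zpowers a) z) (disjoint_iff.mpr hga) (hbn m)]
  have hgcd : (orderOf b).gcd m = 2 ^ k :=
    gcd_orderOf_eq_of_orderOf_pow_eq hfin_b (hb ▸ pow_dvd_pow 2 hk)
      (by rw [hord_bm, hb, Nat.pow_div hk two_pos])
  have hm : Even m :=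
    even_iff_two_dvd.mpr ((dvd_pow_self 2 hk0.ne').trans (hgcd ▸ Nat.gcd_dvd_right _ _))
  obtain ⟨u, hu⟩ : ∃ u : ℕ, (b ^ m) ^ u = b ^ 2 ^ k :=
    hfin_b.pow.mem_powers_iff_mem_zpowers.mpr (hgcd ▸ pow_gcd_orderOf_mem_zpowers_pow b m)
  have hz : (2 : ℤ) ^ (r + t + k) ∣ z :=
    two_pow_dvd_of_pow_mul_zpow_pow_eq_one hconj he hab
      (by rw [ha]; congr 1; omega) hm (hog ▸ pow_orderOf_eq_one _)
  obtain ⟨j, hj, haj⟩ := exists_nat_dvd_pow_eq_zpow hfin_a (d := 2 ^ (r + t + k))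
    (w := z * ∑ i ∈ Finset.range u, ((ε + 2 ^ (r + t)) ^ m) ^ i) (by exact_mod_cast hz.mul_right _)
  have hgu : (b ^ m * a ^ z) ^ u = b ^ 2 ^ k * a ^ j := by
    rw [mul_zpow_pow (zpow_mul_pow_eq_pow_mul_zpow hconj m), hu, haj]
  have hord_gu : orderOf ((b ^ m * a ^ z) ^ u) = orderOf (b ^ m * a ^ z) := by
    have hdisj : Disjoint (zpowers (b ^ 2 ^ k * a ^ j)) (zpowers a) :=
      hgu ▸ (disjoint_iff.mpr hga).mono_left (zpowers_le.mpr (pow_mem (mem_zpowers _) u))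
    rw [hgu, orderOf_mul_of_disjoint (pow_mem (mem_zpowers a) j) hdisj (hbn _),
      orderOf_pow_of_dvd (by positivity) (hb ▸ pow_dvd_pow 2 hk), hb, hog, Nat.pow_div hk two_pos]
  exact ⟨j, hj, by rw [← hgu, zpowers_pow_eq_of_orderOf_pow_eq hfin_g hord_gu]⟩

/-- Let `G = ⟨a⟩ ⋊ ⟨b⟩` with `a` of order `2^(2r+s+t)`, `b` of order `2^(r+s)`,
`b⁻¹ a b = a^(ε + 2^(r+t))` with `ε = ±1`, `r ≥ 2`, `st = 0`. If `1 ≠ g ∈ G`,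
`⟨g⟩ ∩ ⟨a⟩ = 1` and `o(g) = 2^(r+s-k)` with `0 < k ≤ r+s`, then there is `j` with
`2^(r+t+k) ∣ j` and `⟨g⟩ = ⟨b^(2^k) a^j⟩`. -/
theorem stmt_8 (G : Type*) [Group G] (a b : G) (r s t : ℕ) (ε : ℤ)
    (hr : 2 ≤ r) (hst : s * t = 0) (hε : ε = 1 ∨ ε = -1)
    (ha : orderOf a = 2 ^ (2 * r + s + t)) (hb : orderOf b = 2 ^ (r + s))
    (hN : (Subgroup.zpowers a).Normal)
    (hgen : Subgroup.zpowers a ⊔ Subgroup.zpowers b = ⊤)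
    (hint : Subgroup.zpowers a ⊓ Subgroup.zpowers b = ⊥)
    (hconj : b⁻¹ * a * b = a ^ (ε + 2 ^ (r + t)))
    (g : G) (hg1 : g ≠ 1)
    (hga : Subgroup.zpowers g ⊓ Subgroup.zpowers a = ⊥)
    (k : ℕ) (hk0 : 0 < k) (hk : k ≤ r + s)
    (hog : orderOf g = 2 ^ (r + s - k)) :
    ∃ j : ℕ, 2 ^ (r + t + k) ∣ j ∧
      Subgroup.zpowers g = Subgroup.zpowers (b ^ 2 ^ k * a ^ j) :=
  stmt_8_general G a b r s t ε hr hε ha hb hN hgen hint hconj g hga k hk0 hk hog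
end

section
/- Let $G$ be a split metacyclic $2$-group, i.e., $G = \langle a\rangle \rtimes \langle b\rangle \cong C_{2^n} \rtimes C_{2^m}$ with $n, m \geq 1$. If the center $Z(G)$ is not cyclic, then the subgroup $\Omega_1(G)$ generated by all elements of order dividing $2$ is isomorphic to $C_2 \times C_2$. -/
/-!
Let `z = a ^ 2 ^ (n-1)` and `u = b ^ 2 ^ (m-1)` be the involutions of `⟨a⟩` and `⟨b⟩`. Since
`Z(G)` is not cyclic it is not contained in `⟨a⟩`, so some central `c * d` (`c ∈ ⟨a⟩`,
`d ∈ ⟨b⟩`) has `d ≠ 1`. Then `d` commutes with `a`, and `u` is a power of `d` because every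
nontrivial subgroup of the cyclic `2`-group `⟨b⟩` contains `u`; hence `u` commutes with `a`.
If `g = c * d` is an involution, then `d ^ 2 ∈ ⟨a⟩ ∩ ⟨b⟩ = 1`, so `d ∈ ⟨u⟩` commutes with `c`
and `c ^ 2 = 1`, i.e. `g ∈ ⟨z⟩ ⟨u⟩`. Thus `Ω₁(G) = ⟨z⟩ × ⟨u⟩`.
-/

open Subgroup

section

variable {G : Type*} [Group G]

theorem mem_zpowers_pow_of_pow_eq_one {x y : G} {d e : ℕ} (hd : d ≠ 0)
    (hx : orderOf x = d * e) (hy : y ∈ zpowers x) (hyd : y ^ d = 1) : y ∈ zpowers (x ^ e) := by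
  obtain ⟨j, rfl⟩ := hy
  have hdvd : ((d * e : ℕ) : ℤ) ∣ d * j := by
    rw [← hx, orderOf_dvd_iff_zpow_eq_one, zpow_mul', zpow_natCast, hyd]
  obtain ⟨t, rfl⟩ : (e : ℤ) ∣ j := by
    push_cast at hdvd
    exact (mul_dvd_mul_iff_left (by exact_mod_cast hd)).mp hdvd
  exact ⟨t, by simp only [← zpow_natCast, ← zpow_mul]⟩

theorem orderOf_pow_prime_pow {p : ℕ} [hp : Fact p.Prime] {x : G} {k : ℕ}
    (hx : orderOf x = p ^ (k + 1)) : orderOf (x ^ p ^ k) = p := by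
  have := orderOf_pow_orderOf_div (x := x) (n := p) (by simp [hx, hp.out.ne_zero])
    (by rw [hx]; exact dvd_pow_self p k.succ_ne_zero)
  rwa [hx, pow_succ, Nat.mul_div_cancel _ hp.out.pos] at this

theorem pow_prime_pow_mem_zpowers {p : ℕ} [hp : Fact p.Prime] {x y : G} {k : ℕ}
    (hx : orderOf x = p ^ (k + 1)) (hy : y ∈ zpowers x) (hy1 : y ≠ 1) :
    x ^ p ^ k ∈ zpowers y := by
  obtain ⟨e, -, he⟩ := (Nat.dvd_prime_pow hp.out).mp (hx ▸ orderOf_dvd_of_mem_zpowers hy)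
  obtain ⟨e, rfl⟩ : ∃ e', e = e' + 1 := Nat.exists_eq_succ_of_ne_zero (by
    rintro rfl; exact hy1 (orderOf_eq_one_iff.mp (by simpa using he)))
  have hv : orderOf (y ^ p ^ e) = p := orderOf_pow_prime_pow he
  have hvu : y ^ p ^ e ∈ zpowers (x ^ p ^ k) :=
    mem_zpowers_pow_of_pow_eq_one hp.out.ne_zero (by rw [hx, pow_succ'])
      (pow_mem hy _) (by simpa [hv] using pow_orderOf_eq_one (y ^ p ^ e))
  have hcard : Nat.card (zpowers (x ^ p ^ k)) = p := by
    rw [Nat.card_zpowers, orderOf_pow_prime_pow hx]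
  have : Finite (zpowers (x ^ p ^ k)) :=
    Nat.finite_of_card_ne_zero (by simp [hcard, hp.out.ne_zero])
  -- `y ^ p ^ e` and `x ^ p ^ k` both generate the unique subgroup of order `p` of `⟨x⟩`.
  have heq := eq_of_le_of_card_ge (zpowers_le.mpr hvu) (by rw [hcard, Nat.card_zpowers, hv])
  exact zpowers_le.mpr (pow_mem (mem_zpowers y) _) (by rw [heq]; exact mem_zpowers _)

theorem nonempty_zpowers_sup_zpowers_mulEquiv {x y : G} (hxy : Commute x y)
    (hdisj : Disjoint (zpowers x) (zpowers y)) {k l : ℕ} (hx : orderOf x = k)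
    (hy : orderOf y = l) :
    Nonempty ((zpowers x ⊔ zpowers y : Subgroup G) ≃*
      Multiplicative (ZMod k) × Multiplicative (ZMod l)) := by
  have hcomm (s : zpowers x) (t : zpowers y) :
      Commute ((zpowers x).subtype s) ((zpowers y).subtype t) := by
    obtain ⟨_, i, rfl⟩ := s
    obtain ⟨_, j, rfl⟩ := t
    exact hxy.zpow_zpow i j
  let φ := (zpowers x).subtype.noncommCoprod (zpowers y).subtype hcomm
  have hφ : Function.Injective φ := (MonoidHom.noncommCoprod_injective _ _ hcomm).mpr
    ⟨Subtype.val_injective, Subtype.val_injective, by simpa using hdisj⟩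
  have hrange : zpowers x ⊔ zpowers y = φ.range := by
    simp [φ, MonoidHom.noncommCoprod_range]
  exact ⟨(MulEquiv.subgroupCongr hrange).trans <| (MonoidHom.ofInjective hφ).symm.trans <|
    MulEquiv.prodCongr
      (mulEquivOfCyclicCardEq (by rw [Nat.card_zpowers, hx]; exact (Nat.card_zmod k).symm))
      (mulEquivOfCyclicCardEq (by rw [Nat.card_zpowers, hy]; exact (Nat.card_zmod l).symm))⟩

theorem commute_pow_prime_pow_of_not_center_le {p : ℕ} [Fact p.Prime] {a b : G} {m : ℕ}
    (hb : orderOf b = p ^ (m + 1)) (hN : (zpowers a).Normal)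
    (hgen : zpowers a ⊔ zpowers b = ⊤) (hZ : ¬ center G ≤ zpowers a) :
    Commute a (b ^ p ^ m) := by
  obtain ⟨w, hwZ, hwa⟩ := Set.not_subset.mp hZ
  obtain ⟨c, hc, d, hd, rfl⟩ := (mem_sup_of_normal_left (hs := hN)).mp (hgen ▸ mem_top w)
  have hd1 : d ≠ 1 := by
    rintro rfl
    exact hwa (by simpa using hc)
  have hac : Commute a c := by
    obtain ⟨i, rfl⟩ := hc
    exact (Commute.refl a).zpow_right i
  have had : Commute a d := by
    have hcd : d = c⁻¹ * (c * d) := by group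
    rw [hcd]
    exact hac.inv_right.mul_right (mem_center_iff.mp hwZ a)
  obtain ⟨j, hj⟩ := pow_prime_pow_mem_zpowers hb hd hd1
  exact hj ▸ had.zpow_right j

theorem mem_zpowers_sup_zpowers_of_sq_eq_one {a b : G} {n m : ℕ} (ha : orderOf a = 2 ^ (n + 1))
    (hb : orderOf b = 2 ^ (m + 1)) (hN : (zpowers a).Normal)
    (hgen : zpowers a ⊔ zpowers b = ⊤) (hdisj : Disjoint (zpowers a) (zpowers b))
    (hcomm : Commute a (b ^ 2 ^ m)) {g : G} (hg : g ^ 2 = 1) :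
    g ∈ zpowers (a ^ 2 ^ n) ⊔ zpowers (b ^ 2 ^ m) := by
  obtain ⟨c, hc, d, hd, rfl⟩ := (mem_sup_of_normal_left (hs := hN)).mp (hgen ▸ mem_top g)
  have hd2 : d ^ 2 = 1 := by
    refine disjoint_def.mp hdisj ?_ (pow_mem hd 2)
    have hsq : d ^ 2 = (c * (d * c * d⁻¹))⁻¹ * (c * d) ^ 2 := by
      simp only [pow_two]; group
    rw [hsq, hg, mul_one]
    exact inv_mem (mul_mem hc (hN.conj_mem c hc d))
  have hdu : d ∈ zpowers (b ^ 2 ^ m) :=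
    mem_zpowers_pow_of_pow_eq_one two_ne_zero (by rw [hb, pow_succ']) hd hd2
  have hcd : Commute c d := by
    obtain ⟨i, rfl⟩ := hc
    obtain ⟨j, rfl⟩ := hdu
    exact hcomm.zpow_zpow i j
  have hc2 : c ^ 2 = 1 := by rwa [hcd.mul_pow, hd2, mul_one] at hg
  exact mul_mem_sup
    (mem_zpowers_pow_of_pow_eq_one two_ne_zero (by rw [ha, pow_succ']) hc hc2) hdu

end

/-- Let `G = ⟨a⟩ ⋊ ⟨b⟩ ≅ C_{2^n} ⋊ C_{2^m}` be a split metacyclic `2`-group with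
non-cyclic center. Then `Ω₁(G) = ⟨g : g² = 1⟩ ≅ C₂ × C₂`. -/
theorem stmt_9 (G : Type*) [Group G] (a b : G) (n m : ℕ)
    (hn : 1 ≤ n) (hm : 1 ≤ m)
    (ha : orderOf a = 2 ^ n) (hb : orderOf b = 2 ^ m)
    (hN : (Subgroup.zpowers a).Normal)
    (hgen : Subgroup.zpowers a ⊔ Subgroup.zpowers b = ⊤)
    (hint : Subgroup.zpowers a ⊓ Subgroup.zpowers b = ⊥)
    (hZ : ¬ IsCyclic (Subgroup.center G)) :
    Nonempty ((Subgroup.closure {g : G | g ^ 2 = 1}) ≃*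
      (Multiplicative (ZMod 2) × Multiplicative (ZMod 2))) := by
  obtain ⟨n, rfl⟩ := Nat.exists_eq_add_of_le' hn
  obtain ⟨m, rfl⟩ := Nat.exists_eq_add_of_le' hm
  have hdisj : Disjoint (zpowers a) (zpowers b) := disjoint_iff.mpr hint
  have hcomm : Commute a (b ^ 2 ^ m) :=
    commute_pow_prime_pow_of_not_center_le hb hN hgen fun h ↦ hZ (isCyclic_of_le h)
  have hz := orderOf_pow_prime_pow ha
  have hu := orderOf_pow_prime_pow hb
  have hclosure :
      Subgroup.closure {g : G | g ^ 2 = 1} = zpowers (a ^ 2 ^ n) ⊔ zpowers (b ^ 2 ^ m) := by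
    refine le_antisymm ((closure_le _).mpr fun g hg ↦
      mem_zpowers_sup_zpowers_of_sq_eq_one ha hb hN hgen hdisj hcomm hg) (sup_le ?_ ?_)
    · exact zpowers_le.mpr (Subgroup.subset_closure ((orderOf_eq_iff two_pos).mp hz).1)
    · exact zpowers_le.mpr (Subgroup.subset_closure ((orderOf_eq_iff two_pos).mp hu).1)
  rw [hclosure]
  exact nonempty_zpowers_sup_zpowers_mulEquiv (hcomm.pow_left _)
    (hdisj.mono (zpowers_le.mpr (pow_mem (mem_zpowers a) _))
      (zpowers_le.mpr (pow_mem (mem_zpowers b) _))) hz hu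
end

section
/- Let $G$ be a split metacyclic $2$-group $G = \langle a\rangle \rtimes \langle b\rangle \cong C_{2^n} \rtimes C_{2^m}$ whose center is not cyclic. Then every element of $\Omega_1(G)$ lies in the center of $G$; in fact $\Omega_1(G) = \langle a^{2^{n-1}}\rangle \times \langle b^{2^{m-1}}\rangle \leq Z(G)$. -/
/-!
Every element of `G` is `a ^ i * b ^ j`. If the involution `t = b ^ 2 ^ (m - 1)` of `⟨b⟩` did not
commute with `a`, then a central `a ^ i * b ^ j` would have `b ^ j = 1`, since `t` is a power of
every nontrivial `b ^ j`; so `Z(G) ≤ ⟨a⟩` would be cyclic. Hence `t` is central. The involution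
`z = a ^ 2 ^ (n - 1)` is central because it is the only involution of the normal subgroup `⟨a⟩`.
Finally, if `(a ^ i * b ^ j) ^ 2 = 1` then `b ^ (2 * j) ∈ ⟨a⟩ ⊓ ⟨b⟩ = ⊥`, so `b ^ j ∈ ⟨t⟩` is
central, whence `a ^ (2 * i) = 1` and `a ^ i ∈ ⟨z⟩`.
-/

section

open Subgroup
open scoped Pointwise

variable {G : Type*} [Group G]

theorem pow_sq_eq_one_of_orderOf_eq_two_mul {x : G} {k : ℕ} (h : orderOf x = 2 * k) :
    (x ^ k) ^ 2 = 1 := by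
  rw [← pow_mul, mul_comm, ← h, pow_orderOf_eq_one]

theorem eq_one_or_eq_pow_of_sq_eq_one {a x : G} {k : ℕ} (ha : orderOf a = 2 * k)
    (hx : x ∈ zpowers a) (hx2 : x ^ 2 = 1) : x = 1 ∨ x = a ^ k := by
  obtain ⟨i, rfl⟩ := mem_zpowers_iff.mp hx
  have hki : (k : ℤ) ∣ i := by
    rw [← zpow_natCast, ← zpow_mul, ← orderOf_dvd_iff_zpow_eq_one, ha, mul_comm i] at hx2
    push_cast at hx2
    exact (mul_dvd_mul_iff_left two_ne_zero).mp hx2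
  have hak : a ^ (2 * k) = 1 := ha ▸ pow_orderOf_eq_one a
  obtain ⟨l, rfl⟩ := hki
  rcases Int.even_or_odd' l with ⟨l, rfl | rfl⟩
  · left
    rw [show (k : ℤ) * (2 * l) = (2 * k : ℕ) * l by push_cast; ring, zpow_mul, zpow_natCast, hak,
      one_zpow]
  · right
    rw [show (k : ℤ) * (2 * l + 1) = (2 * k : ℕ) * l + k by push_cast; ring, zpow_add, zpow_mul,
      zpow_natCast, hak, one_zpow, one_mul, zpow_natCast]

theorem mem_zpowers_pow_of_sq_eq_one {a x : G} {k : ℕ} (ha : orderOf a = 2 * k)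
    (hx : x ∈ zpowers a) (hx2 : x ^ 2 = 1) : x ∈ zpowers (a ^ k) := by
  rcases eq_one_or_eq_pow_of_sq_eq_one ha hx hx2 with rfl | rfl
  exacts [one_mem _, mem_zpowers _]

theorem pow_two_pow_pred_mem_zpowers {b x : G} {m : ℕ} (hb : orderOf b = 2 ^ m)
    (hx : x ∈ zpowers b) (hx1 : x ≠ 1) : b ^ 2 ^ (m - 1) ∈ zpowers x := by
  obtain ⟨c, hcm, hxc⟩ :=
    (Nat.dvd_prime_pow Nat.prime_two).mp (hb ▸ orderOf_dvd_of_mem_zpowers hx)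
  have hc : c ≠ 0 := by
    rintro rfl
    exact hx1 (orderOf_eq_one_iff.mp hxc)
  have hy2 : (x ^ 2 ^ (c - 1)) ^ 2 = 1 :=
    pow_sq_eq_one_of_orderOf_eq_two_mul (by rw [hxc, mul_pow_sub_one hc])
  have hy1 : x ^ 2 ^ (c - 1) ≠ 1 :=
    pow_ne_one_of_lt_orderOf (by positivity) (hxc ▸ Nat.pow_lt_pow_right one_lt_two (by omega))
  have hb' : orderOf b = 2 * 2 ^ (m - 1) := by rw [hb, mul_pow_sub_one (by omega)]
  rw [← (eq_one_or_eq_pow_of_sq_eq_one hb' (pow_mem hx _) hy2).resolve_left hy1]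
  exact pow_mem (mem_zpowers x) _

theorem pow_mem_center_of_zpowers_normal {a : G} {k : ℕ} (hN : (zpowers a).Normal)
    (ha : orderOf a = 2 * k) : a ^ k ∈ center G := by
  rcases eq_or_ne k 0 with rfl | hk
  · simp [one_mem]
  refine mem_center_iff.mpr fun g ↦ mul_inv_eq_iff_eq_mul.mp ?_
  have hak : a ^ k ≠ 1 := pow_ne_one_of_lt_orderOf hk (by omega)
  refine (eq_one_or_eq_pow_of_sq_eq_one ha (hN.conj_mem _ (pow_mem (mem_zpowers a) k) g)
    ?_).resolve_left ?_
  · rw [conj_pow, pow_sq_eq_one_of_orderOf_eq_two_mul ha, mul_one, mul_inv_cancel]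
  · rwa [conj_eq_one_iff]

section SplitMetacyclic

variable {a b : G}

theorem exists_eq_zpow_mul_zpow (hN : (zpowers a).Normal) (hgen : zpowers a ⊔ zpowers b = ⊤)
    (g : G) : ∃ i j : ℤ, g = a ^ i * b ^ j := by
  have hg : g ∈ (zpowers a : Set G) * (zpowers b : Set G) := by
    rw [← normal_mul, hgen]
    exact mem_top g
  obtain ⟨_, ⟨i, rfl⟩, _, ⟨j, rfl⟩, rfl⟩ := hg
  exact ⟨i, j, rfl⟩

theorem mem_center_of_commute_of_sup_eq_top (hgen : zpowers a ⊔ zpowers b = ⊤) {g : G}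
    (hag : Commute a g) (hbg : Commute b g) : g ∈ center G := by
  have hle : zpowers a ⊔ zpowers b ≤ centralizer {g} :=
    sup_le (zpowers_le.mpr (mem_centralizer_singleton_iff.mpr hag.eq))
      (zpowers_le.mpr (mem_centralizer_singleton_iff.mpr hbg.eq))
  rw [hgen] at hle
  exact mem_center_iff.mpr fun x ↦ mem_centralizer_singleton_iff.mp (hle (mem_top x))

theorem center_le_zpowers_of_not_commute {m : ℕ} (hb : orderOf b = 2 ^ m)
    (hN : (zpowers a).Normal) (hgen : zpowers a ⊔ zpowers b = ⊤)
    (h : ¬Commute a (b ^ 2 ^ (m - 1))) : center G ≤ zpowers a := by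
  intro z hz
  obtain ⟨i, j, rfl⟩ := exists_eq_zpow_mul_zpow hN hgen z
  have hj : Commute a (b ^ j) := by
    simpa using ((Commute.refl a).zpow_right (-i)).mul_right (mem_center_iff.mp hz a)
  by_cases hj1 : b ^ j = 1
  · rw [hj1, mul_one]
    exact zpow_mem (mem_zpowers a) i
  · obtain ⟨k, hk⟩ :=
      mem_zpowers_iff.mp (pow_two_pow_pred_mem_zpowers hb (zpow_mem (mem_zpowers b) j) hj1)
    exact absurd (hk ▸ hj.zpow_right k) h

theorem mem_sup_of_sq_eq_one {k l : ℕ} (ha : orderOf a = 2 * k) (hb : orderOf b = 2 * l)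
    (hN : (zpowers a).Normal) (hgen : zpowers a ⊔ zpowers b = ⊤)
    (hint : zpowers a ⊓ zpowers b = ⊥) (ht : b ^ l ∈ center G) {g : G} (hg : g ^ 2 = 1) :
    g ∈ zpowers (a ^ k) ⊔ zpowers (b ^ l) := by
  obtain ⟨i, j, rfl⟩ := exists_eq_zpow_mul_zpow hN hgen g
  have hbj2 : (b ^ j) ^ 2 = 1 := by
    have hmem : (b ^ j) ^ 2 ∈ zpowers a := by
      have hsq : (b ^ j) ^ 2 = a ^ (-i) * ((a ^ i * b ^ j) * a ^ (-i) * (a ^ i * b ^ j)⁻¹) *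
          (a ^ i * b ^ j) ^ 2 := by simp only [pow_two]; group
      rw [hsq, hg, mul_one]
      exact mul_mem (zpow_mem (mem_zpowers a) _) (hN.conj_mem _ (zpow_mem (mem_zpowers a) _) _)
    have : (b ^ j) ^ 2 ∈ zpowers a ⊓ zpowers b := ⟨hmem, pow_mem (zpow_mem (mem_zpowers b) j) 2⟩
    rwa [hint, mem_bot] at this
  have hbj : b ^ j ∈ zpowers (b ^ l) :=
    mem_zpowers_pow_of_sq_eq_one hb (zpow_mem (mem_zpowers b) j) hbj2
  have hai2 : (a ^ i) ^ 2 = 1 := by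
    have hc : Commute (a ^ i) (b ^ j) := (mem_center_iff.mp (zpowers_le.mpr ht hbj) (a ^ i))
    calc (a ^ i) ^ 2 = (a ^ i) ^ 2 * (b ^ j) ^ 2 := by rw [hbj2, mul_one]
      _ = (a ^ i * b ^ j) ^ 2 := (hc.mul_pow 2).symm
      _ = 1 := hg
  exact mul_mem (mem_sup_left (mem_zpowers_pow_of_sq_eq_one ha (zpow_mem (mem_zpowers a) i) hai2))
    (mem_sup_right hbj)

end SplitMetacyclic

end

/-- Let `G = ⟨a⟩ ⋊ ⟨b⟩ ≅ C_{2^n} ⋊ C_{2^m}` be a split metacyclic `2`-group whose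
center is not cyclic. Then `Ω₁(G) ≤ Z(G)` and
`Ω₁(G) = ⟨a^(2^(n-1))⟩ ⊔ ⟨b^(2^(m-1))⟩`. -/
theorem stmt_10 (G : Type*) [Group G] (a b : G) (n m : ℕ)
    (hn : 1 ≤ n) (hm : 1 ≤ m)
    (ha : orderOf a = 2 ^ n) (hb : orderOf b = 2 ^ m)
    (hN : (Subgroup.zpowers a).Normal)
    (hgen : Subgroup.zpowers a ⊔ Subgroup.zpowers b = ⊤)
    (hint : Subgroup.zpowers a ⊓ Subgroup.zpowers b = ⊥)
    (hZ : ¬ IsCyclic (Subgroup.center G)) :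
    Subgroup.closure {g : G | g ^ 2 = 1} ≤ Subgroup.center G ∧
    Subgroup.closure {g : G | g ^ 2 = 1} =
      Subgroup.zpowers (a ^ 2 ^ (n - 1)) ⊔ Subgroup.zpowers (b ^ 2 ^ (m - 1)) := by
  have ha' : orderOf a = 2 * 2 ^ (n - 1) := by rw [ha, mul_pow_sub_one (by omega)]
  have hb' : orderOf b = 2 * 2 ^ (m - 1) := by rw [hb, mul_pow_sub_one (by omega)]
  have hz : a ^ 2 ^ (n - 1) ∈ Subgroup.center G := pow_mem_center_of_zpowers_normal hN ha'
  have ht : b ^ 2 ^ (m - 1) ∈ Subgroup.center G := by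
    refine mem_center_of_commute_of_sup_eq_top hgen ?_ ((Commute.refl b).pow_right _)
    by_contra h
    exact hZ (Subgroup.isCyclic_of_le (center_le_zpowers_of_not_commute hb hN hgen h))
  open Subgroup in
  have hΩ : closure {g : G | g ^ 2 = 1} = zpowers (a ^ 2 ^ (n - 1)) ⊔ zpowers (b ^ 2 ^ (m - 1)) :=
    le_antisymm ((closure_le _).mpr fun g hg ↦ mem_sup_of_sq_eq_one ha' hb' hN hgen hint ht hg)
      (sup_le (zpowers_le.mpr (subset_closure (pow_sq_eq_one_of_orderOf_eq_two_mul ha')))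
        (zpowers_le.mpr (subset_closure (pow_sq_eq_one_of_orderOf_eq_two_mul hb'))))
  exact ⟨hΩ ▸ sup_le (Subgroup.zpowers_le.mpr hz) (Subgroup.zpowers_le.mpr ht), hΩ⟩
end

section
/- Let $G = \langle a\rangle \rtimes \langle b\rangle \cong C_n \rtimes C_m$ with $b^{-1}ab = a^r$, $1 \neq r \in \mathbb{Z}_n^*$. Then $G$ is absolutely split with respect to $\langle a\rangle$ if and only if for every admissible pair $(i,j) \in \mathbb{Z}_m \times \mathbb{Z}_n$ there exists an admissible pair $(1,t)$ with $t \in \mathbb{Z}_n$ such that $j(r-1) \equiv t(r^i - 1) \pmod{n(r-1)}$. -/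
open Subgroup Finset
open scoped Pointwise

private lemma conj_pow_aux {G : Type*} [Group G] (a b : G) (r : ℕ)
    (hconj : b⁻¹ * a * b = a ^ r) (s : ℕ) : a ^ s * b = b * a ^ (r * s) := by
  have h : b⁻¹ * a ^ s * b = a ^ (r * s) := by
    induction s with
    | zero => simp
    | succ k ih =>
      have h0 : b⁻¹ * a ^ (k + 1) * b = (b⁻¹ * a ^ k * b) * (b⁻¹ * a * b) := by
        group
      rw [h0, ih, hconj, ← pow_add, Nat.mul_succ]
  calc a ^ s * b = b * (b⁻¹ * a ^ s * b) := by group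
  _ = b * a ^ (r * s) := by rw [h]

private lemma pow_formula {G : Type*} [Group G] (a b : G) (r t : ℕ)
    (hconj : b⁻¹ * a * b = a ^ r) (i : ℕ) :
    (b * a ^ t) ^ i = b ^ i * a ^ (t * ∑ k ∈ Finset.range i, r ^ k) := by
  induction i with
  | zero => simp
  | succ k ih =>
    have hs : (b ^ k * a ^ (t * ∑ j ∈ Finset.range k, r ^ j)) * (b * a ^ t)
        = b ^ (k + 1) * a ^ (r * (t * ∑ j ∈ Finset.range k, r ^ j) + t) := by
      calc (b ^ k * a ^ (t * ∑ j ∈ Finset.range k, r ^ j)) * (b * a ^ t)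
          = b ^ k * (a ^ (t * ∑ j ∈ Finset.range k, r ^ j) * b) * a ^ t := by group
        _ = b ^ k * (b * a ^ (r * (t * ∑ j ∈ Finset.range k, r ^ j))) * a ^ t := by
            rw [conj_pow_aux a b r hconj]
        _ = b ^ (k + 1) * a ^ (r * (t * ∑ j ∈ Finset.range k, r ^ j) + t) := by
            rw [pow_succ, pow_add]; group
    have hexp : r * (t * ∑ j ∈ Finset.range k, r ^ j) + t
        = t * (r * (∑ j ∈ Finset.range k, r ^ j) + 1) := by ring
    rw [pow_succ, ih, hs, geom_sum_succ, ← hexp]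

private lemma zpow_reduce {G : Type*} [Group G] (g : G) (n : ℕ) (hn : 0 < n)
    (h : orderOf g = n) (z : ℤ) : ∃ k : ℕ, k < n ∧ g ^ z = g ^ k := by
  have hn' : (n : ℤ) ≠ 0 := by exact_mod_cast hn.ne'
  have h0 : 0 ≤ z % n := Int.emod_nonneg z hn'
  have h1 : z % n < n := Int.emod_lt_of_pos z (by exact_mod_cast hn)
  refine ⟨(z % n).toNat, ?_, ?_⟩
  · have := Int.toNat_of_nonneg h0; omega
  · have hd : (n : ℤ) ∣ z - z % n := ⟨z / n, by rw [Int.emod_def]; ring⟩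
    have h2 : g ^ (z - z % n) = 1 := by
      refine orderOf_dvd_iff_zpow_eq_one.mp ?_
      rw [h]; exact hd
    rw [zpow_sub] at h2
    have h3 : g ^ z = g ^ (z % n) := mul_inv_eq_one.mp h2
    have h4 : g ^ (((z % n).toNat : ℤ)) = g ^ ((z % (n:ℤ)).toNat) := zpow_natCast g _
    rw [h3, ← h4, Int.toNat_of_nonneg h0]

/-- Let `G = ⟨a⟩ ⋊ ⟨b⟩ ≅ C_n ⋊ C_m` with `b⁻¹ a b = a^r`, `1 ≠ r ∈ (ℤ/n)*`. Then
`G` is absolutely split with respect to `⟨a⟩` if and only if for every admissible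
pair `(i, j)` there exists an admissible pair `(1, t)` with
`j(r-1) ≡ t(r^i - 1) (mod n(r-1))`. -/
theorem stmt_13 (G : Type*) [Group G] (a b : G) (n m : ℕ) (r : ℕ)
    (hn : 0 < n) (hm : 0 < m)
    (ha : orderOf a = n) (hb : orderOf b = m)
    (hN : (Subgroup.zpowers a).Normal)
    (hgen : Subgroup.zpowers a ⊔ Subgroup.zpowers b = ⊤)
    (hint : Subgroup.zpowers a ⊓ Subgroup.zpowers b = ⊥)
    (hr : IsUnit (r : ZMod n)) (hr1 : (r : ZMod n) ≠ 1)
    (hconj : b⁻¹ * a * b = a ^ r) :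
    ((∀ x : G, Subgroup.zpowers x ⊓ Subgroup.zpowers a = ⊥ →
        ∃ y : G, x ∈ Subgroup.zpowers y ∧
          Subgroup.zpowers a ⊔ Subgroup.zpowers y = ⊤ ∧
          Subgroup.zpowers a ⊓ Subgroup.zpowers y = ⊥) ↔
      (∀ i j : ℕ, i < m → j < n →
        Subgroup.zpowers a ⊓ Subgroup.zpowers (b ^ i * a ^ j) = ⊥ →
        ∃ t : ℕ, t < n ∧
          Subgroup.zpowers a ⊓ Subgroup.zpowers (b * a ^ t) = ⊥ ∧
          (j : ℤ) * ((r : ℤ) - 1) ≡ (t : ℤ) * ((r : ℤ) ^ i - 1)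
            [ZMOD (n : ℤ) * ((r : ℤ) - 1)])) := by
  haveI := hN
  have hrne : r ≠ 1 := by
    intro h; apply hr1; rw [h]; exact Nat.cast_one
  have hr_int : (r : ℤ) - 1 ≠ 0 := by
    intro h
    have : (r : ℤ) = 1 := by linarith
    exact hrne (by exact_mod_cast this)
  have hgeom : ∀ i : ℕ, ((∑ k ∈ Finset.range i, r ^ k : ℕ) : ℤ) * ((r : ℤ) - 1)
      = (r : ℤ) ^ i - 1 := by
    intro i; push_cast; exact geom_sum_mul _ _
  constructor
  · -- forward
    intro hAS i j him hjn hadm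
    obtain ⟨y, hxy, hsup, hinf⟩ := hAS (b ^ i * a ^ j) (by rw [inf_comm]; exact hadm)
    set π := QuotientGroup.mk' (Subgroup.zpowers a) with hπ
    have hπa : π a = 1 := (QuotientGroup.eq_one_iff a).mpr (mem_zpowers a)
    have hmap : Subgroup.zpowers (π y) = ⊤ := by
      have h1 : Subgroup.map π ⊤ = ⊤ :=
        Subgroup.map_top_of_surjective π (QuotientGroup.mk'_surjective _)
      rw [← hsup, Subgroup.map_sup, MonoidHom.map_zpowers, MonoidHom.map_zpowers,
        hπa, Subgroup.zpowers_one_eq_bot, bot_sup_eq] at h1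
      exact h1
    obtain ⟨w, hw⟩ : ∃ w : ℤ, (π y) ^ w = π b :=
      Subgroup.mem_zpowers_iff.mp (hmap ▸ Subgroup.mem_top (π b))
    have hker : ∀ g : G, π g = 1 → g ∈ Subgroup.zpowers a := by
      intro g hg
      have : g ∈ π.ker := MonoidHom.mem_ker.mpr hg
      rwa [hπ, QuotientGroup.ker_mk'] at this
    have h2 : (y ^ w)⁻¹ * b ∈ Subgroup.zpowers a := by
      apply hker
      rw [map_mul, map_inv, map_zpow, hw, inv_mul_cancel]
    obtain ⟨z, hz⟩ := Subgroup.mem_zpowers_iff.mp h2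
    have hyw' : y ^ w = b * a ^ (-z) := by
      rw [zpow_neg, hz]; group
    obtain ⟨t, htn, hta⟩ := zpow_reduce a n hn ha (-z)
    have hyw : y ^ w = b * a ^ t := by rw [hyw', hta]
    obtain ⟨e, he⟩ := Subgroup.mem_zpowers_iff.mp hxy
    have hπx1 : π (b ^ i * a ^ j) = (π y) ^ (w * (i : ℤ)) := by
      have h3 : π (b ^ i * a ^ j) = (π b) ^ i := by
        rw [map_mul, map_pow, map_pow, hπa, one_pow, mul_one]
      rw [h3, ← hw, ← zpow_natCast ((π y) ^ w), ← zpow_mul]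
    have hπx2 : π (b ^ i * a ^ j) = (π y) ^ e := by rw [← he, map_zpow]
    have h4 : y ^ (e - w * (i : ℤ)) = 1 := by
      have h5 : π (y ^ (e - w * (i : ℤ))) = 1 := by
        rw [map_zpow, zpow_sub, ← hπx1, ← hπx2, mul_inv_cancel]
      have h6 : y ^ (e - w * (i : ℤ)) ∈ Subgroup.zpowers a ⊓ Subgroup.zpowers y :=
        Subgroup.mem_inf.mpr ⟨hker _ h5, Subgroup.zpow_mem _ (mem_zpowers y) _⟩
      rw [hinf] at h6
      exact Subgroup.mem_bot.mp h6
    have h7 : y ^ e = y ^ (w * (i : ℤ)) := by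
      rw [zpow_sub] at h4
      exact mul_inv_eq_one.mp h4
    have hx2 : b ^ i * a ^ j = (b * a ^ t) ^ i := by
      rw [← he, h7, zpow_mul, hyw, zpow_natCast]
    rw [pow_formula a b r t hconj i] at hx2
    have hcancel : a ^ j = a ^ (t * ∑ k ∈ Finset.range i, r ^ k) :=
      mul_left_cancel hx2
    have hdvd : (n : ℤ) ∣ ((t * ∑ k ∈ Finset.range i, r ^ k : ℕ) : ℤ) - (j : ℤ) := by
      rw [← ha]
      apply orderOf_dvd_iff_zpow_eq_one.mpr
      rw [zpow_sub, zpow_natCast, zpow_natCast, ← hcancel, mul_inv_cancel]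
    refine ⟨t, htn, ?_, ?_⟩
    · have hle : Subgroup.zpowers (b * a ^ t) ≤ Subgroup.zpowers y := by
        rw [Subgroup.zpowers_le, ← hyw]
        exact Subgroup.zpow_mem _ (mem_zpowers y) w
      have := inf_le_inf_left (Subgroup.zpowers a) hle
      rw [hinf] at this
      exact le_bot_iff.mp this
    · rw [Int.modEq_iff_dvd]
      have heq : (t : ℤ) * ((r : ℤ) ^ i - 1) - (j : ℤ) * ((r : ℤ) - 1)
          = (((t * ∑ k ∈ Finset.range i, r ^ k : ℕ) : ℤ) - (j : ℤ)) * ((r : ℤ) - 1) := by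
        rw [← hgeom i]; push_cast; ring
      rw [heq]
      exact mul_dvd_mul_right hdvd _
  · -- backward
    intro hC x hx
    have hx_mem : x ∈ (Subgroup.zpowers b : Set G) * (Subgroup.zpowers a : Set G) := by
      rw [← Subgroup.mul_normal, sup_comm, hgen]
      exact Subgroup.mem_top x
    obtain ⟨p, hp, q, hq, hpq⟩ := hx_mem
    obtain ⟨i', hi'⟩ := Subgroup.mem_zpowers_iff.mp hp
    obtain ⟨j', hj'⟩ := Subgroup.mem_zpowers_iff.mp hq
    obtain ⟨i, him, hbi⟩ := zpow_reduce b m hm hb i'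
    obtain ⟨j, hjn, haj⟩ := zpow_reduce a n hn ha j'
    have hxeq : x = b ^ i * a ^ j := by rw [← hpq, ← hi', ← hj', hbi, haj]
    have hadm0 : Subgroup.zpowers a ⊓ Subgroup.zpowers (b ^ i * a ^ j) = ⊥ := by
      rw [← hxeq, inf_comm]; exact hx
    obtain ⟨t, htn, hadm, hcong⟩ := hC i j him hjn hadm0
    have hdvd : (n : ℤ) ∣ ((t * ∑ k ∈ Finset.range i, r ^ k : ℕ) : ℤ) - (j : ℤ) := by
      have h1 := Int.ModEq.dvd hcong
      have heq : (t : ℤ) * ((r : ℤ) ^ i - 1) - (j : ℤ) * ((r : ℤ) - 1)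
          = (((t * ∑ k ∈ Finset.range i, r ^ k : ℕ) : ℤ) - (j : ℤ)) * ((r : ℤ) - 1) := by
        rw [← hgeom i]; push_cast; ring
      rw [heq] at h1
      exact (mul_dvd_mul_iff_right hr_int).mp h1
    have hpow : a ^ (t * ∑ k ∈ Finset.range i, r ^ k) = a ^ j := by
      have h2 : a ^ (((t * ∑ k ∈ Finset.range i, r ^ k : ℕ) : ℤ) - (j : ℤ)) = 1 := by
        apply orderOf_dvd_iff_zpow_eq_one.mp
        rw [ha]; exact hdvd
      rw [zpow_sub, zpow_natCast, zpow_natCast] at h2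
      exact mul_inv_eq_one.mp h2
    refine ⟨b * a ^ t, ?_, ?_, hadm⟩
    · refine Subgroup.mem_zpowers_iff.mpr ⟨(i : ℤ), ?_⟩
      rw [zpow_natCast, pow_formula a b r t hconj i, hpow, ← hxeq]
    · rw [eq_top_iff, ← hgen]
      refine sup_le le_sup_left (Subgroup.zpowers_le.mpr ?_)
      have h3 : (b * a ^ t) * (a ^ t)⁻¹ ∈
          Subgroup.zpowers a ⊔ Subgroup.zpowers (b * a ^ t) :=
        mul_mem (Subgroup.mem_sup_right (mem_zpowers _))
          (inv_mem (Subgroup.mem_sup_left (Subgroup.pow_mem _ (mem_zpowers a) t)))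
      simpa using h3
end

section
/- Let $G = \langle a\rangle \rtimes \langle b\rangle \cong C_{2^n} \rtimes C_{2^m}$ be a split metacyclic $2$-group acting vertex-transitively on a connected graph $\Gamma$. If the center $Z(G)$ is not cyclic, then the action of $G$ on the vertices of $\Gamma$ is regular. -/
/-! A nontrivial vertex stabilizer of the finite `2`-group `G` contains an involution, and a
central element fixing one vertex fixes every vertex by transitivity, hence is trivial by
faithfulness; so it suffices that every involution of `G` is central. The abelian `2`-group
`Z(G)` is not cyclic, so it has two involutions, and as the cyclic group `⟨a⟩` has only one, some
central involution `z` lies outside `⟨a⟩`. An involution `g ∉ ⟨a⟩` has the same image as `z` in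
the cyclic group `G/⟨a⟩`, so `z⁻¹ g` is trivial or the unique involution of the normal cyclic
subgroup `⟨a⟩`, which is central; hence `g = z (z⁻¹ g)` is central. -/

open Subgroup

section Involutions

variable {G : Type*} [Group G]

theorem IsCyclic.subsingleton_orderOf_eq_two [Finite G] [IsCyclic G] :
    {x : G | orderOf x = 2}.Subsingleton := by
  classical
  have := Fintype.ofFinite G
  intro x hx y hy
  have hcard := IsCyclic.card_orderOf_eq_totient (α := G) (hx ▸ orderOf_dvd_card)
  rw [Nat.totient_two] at hcard
  exact Finset.card_le_one.mp hcard.le x (by simpa using hx) y (by simpa using hy)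

theorem Subgroup.eq_of_orderOf_eq_two {A : Subgroup G} [Finite A] [IsCyclic A] {x y : G}
    (hxA : x ∈ A) (hyA : y ∈ A) (hx : orderOf x = 2) (hy : orderOf y = 2) : x = y :=
  congrArg Subtype.val <| IsCyclic.subsingleton_orderOf_eq_two
    ((orderOf_mk x hxA).trans hx) ((orderOf_mk y hyA).trans hy)

theorem Subgroup.mem_center_of_mem_of_orderOf_eq_two {A : Subgroup G} [A.Normal] [Finite A]
    [IsCyclic A] {t : G} (htA : t ∈ A) (ht : orderOf t = 2) : t ∈ center G := by
  refine mem_center_iff.mpr fun g => ?_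
  have hconj : g * t * g⁻¹ = t := by
    refine A.eq_of_orderOf_eq_two (Normal.conj_mem ‹_› t htA g) htA ?_ ht
    rw [← MulAut.conj_apply, MulEquiv.orderOf_eq, ht]
  exact mul_inv_eq_iff_eq_mul.mp hconj

theorem IsPGroup.isCyclic_of_subsingleton_orderOf_eq_two {Z : Type*} [CommGroup Z] [Finite Z]
    (hZ : IsPGroup 2 Z) (h : {x : Z | orderOf x = 2}.Subsingleton) : IsCyclic Z := by
  obtain ⟨e, he⟩ := isPGroup_iff_exponent_eq_pow.mp hZ
  obtain ⟨y, hy⟩ := Monoid.exists_orderOf_eq_exponent (Monoid.ExponentExists.of_finite (G := Z))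
  rw [he] at hy
  suffices ∀ k x, k ≤ e → x ^ 2 ^ k = 1 → x ∈ zpowers y from
    ⟨y, fun x => this e x le_rfl (he ▸ Monoid.pow_exponent_eq_one x)⟩
  intro k
  induction k with
  | zero => simp
  | succ k ih =>
    intro x hk hx
    by_cases h1 : x ^ 2 ^ k = 1
    · exact ih x (by omega) h1
    -- `x ^ 2 ^ k` is the involution `y ^ 2 ^ (e - 1)`, so `x` is a power of `y` up to an
    -- element of exponent `2 ^ k`
    have hu : orderOf (y ^ 2 ^ (e - 1)) = 2 := by
      rw [← Nat.pow_div (by omega : 1 ≤ e) two_pos, pow_one, ← hy]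
      exact orderOf_pow_orderOf_div (by simp [hy]) (hy ▸ dvd_pow_self 2 (by omega))
    have hxy : x ^ 2 ^ k = y ^ 2 ^ (e - 1) :=
      h (orderOf_eq_prime (by rw [← pow_mul, ← pow_succ, hx]) h1) hu
    have hrest : (x * (y ^ 2 ^ (e - 1 - k))⁻¹) ^ 2 ^ k = 1 := by
      rw [mul_pow, inv_pow, ← pow_mul, ← pow_add, Nat.sub_add_cancel (by omega), hxy,
        mul_inv_cancel]
    simpa using mul_mem (ih _ (by omega) hrest) (pow_mem (mem_zpowers y) (2 ^ (e - 1 - k)))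

theorem IsPGroup.orderOf_pow_orderOf_div_prime {p : ℕ} [Fact p.Prime] (hG : IsPGroup p G)
    {g : G} (hg : g ≠ 1) : orderOf (g ^ (orderOf g / p)) = p :=
  orderOf_pow_orderOf_div (hG.isOfFinOrder (Fact.out : p.Prime).ne_zero g).orderOf_pos.ne'
    (hG.dvd_orderOf hg)

theorem exists_orderOf_eq_two_mem_center_notMem {A : Subgroup G} [Finite G] [IsCyclic A]
    (hG : IsPGroup 2 G) (hZ : ¬ IsCyclic (center G)) :
    ∃ z ∈ center G, z ∉ A ∧ orderOf z = 2 := by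
  open scoped IsMulCommutative in
  obtain ⟨x, hx, y, hy, hxy⟩ := Set.not_subsingleton_iff.mp
    (mt (hG.to_subgroup _).isCyclic_of_subsingleton_orderOf_eq_two hZ)
  by_contra! hA
  have hmemA : ∀ z : center G, orderOf z = 2 → (z : G) ∈ A := fun z hz =>
    not_not.mp fun hzA => hA z z.2 hzA ((orderOf_coe z).trans hz)
  exact hxy <| Subtype.ext <| A.eq_of_orderOf_eq_two (hmemA x hx) (hmemA y hy)
    ((orderOf_coe x).trans hx) ((orderOf_coe y).trans hy)

theorem mem_center_of_orderOf_eq_two_of_not_isCyclic_center {A : Subgroup G} [A.Normal]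
    [IsCyclic A] [IsCyclic (G ⧸ A)] [Finite G] (hG : IsPGroup 2 G) (hZ : ¬ IsCyclic (center G))
    {g : G} (hg : orderOf g = 2) : g ∈ center G := by
  obtain ⟨z, hzZ, hzA, hz⟩ := exists_orderOf_eq_two_mem_center_notMem (A := A) hG hZ
  by_cases hgA : g ∈ A
  · exact A.mem_center_of_mem_of_orderOf_eq_two hgA hg
  have orderOf_mk_eq_two {x : G} (hxA : x ∉ A) (hx : orderOf x = 2) :
      orderOf (x : G ⧸ A) = 2 :=
    orderOf_eq_prime (by rw [← QuotientGroup.mk_pow, ← hx, pow_orderOf_eq_one]; rfl)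
      (mt (QuotientGroup.eq_one_iff x).mp hxA)
  -- `g` and `z` have the same image, the involution of the cyclic group `G ⧸ A`
  have hzg : z⁻¹ * g ∈ A := QuotientGroup.eq.mp <| IsCyclic.subsingleton_orderOf_eq_two
    (orderOf_mk_eq_two hzA hz) (orderOf_mk_eq_two hgA hg)
  have hsq : (z⁻¹ * g) ^ 2 = 1 := by
    rw [(Commute.inv_left (mem_center_iff.mp hzZ g).symm).mul_pow, inv_pow,
      ← hz, pow_orderOf_eq_one, hz, ← hg, pow_orderOf_eq_one, inv_one, one_mul]
  have hcenter : z⁻¹ * g ∈ center G := by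
    by_cases h1 : z⁻¹ * g = 1
    · exact h1 ▸ one_mem _
    · exact A.mem_center_of_mem_of_orderOf_eq_two hzg (orderOf_eq_prime hsq h1)
  simpa using mul_mem hzZ hcenter

end Involutions

theorem MulAction.eq_one_of_mem_center_of_mem_stabilizer {G V : Type*} [Group G] [MulAction G V]
    [MulAction.IsPretransitive G V] [FaithfulSMul G V] {g : G} {v : V} (hgZ : g ∈ center G)
    (hgv : g ∈ stabilizer G v) : g = 1 :=
  eq_of_smul_eq_smul fun u => by
    obtain ⟨x, rfl⟩ := exists_smul_eq G v u
    rw [smul_smul, ← mem_center_iff.mp hgZ x, ← smul_smul, mem_stabilizer_iff.mp hgv, one_smul]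

section Metacyclic

variable {G : Type*} [Group G] {A : Subgroup G} {b : G}

theorem isCyclic_quotient_of_sup_zpowers_eq_top [A.Normal] (h : A ⊔ zpowers b = ⊤) :
    IsCyclic (G ⧸ A) := by
  refine isCyclic_iff_exists_zpowers_eq_top.mpr ⟨b, ?_⟩
  change zpowers (QuotientGroup.mk' A b) = ⊤
  rw [← MonoidHom.map_zpowers (QuotientGroup.mk' A), ← bot_sup_eq (map _ _),
    ← QuotientGroup.map_mk'_self A, ← Subgroup.map_sup, h,
    map_top_of_surjective _ (QuotientGroup.mk'_surjective A)]

theorem IsPGroup.of_sup_zpowers_eq_top {p n m : ℕ} {a : G} [(zpowers a).Normal]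
    (ha : orderOf a = p ^ n) (hb : orderOf b = p ^ m) (h : zpowers a ⊔ zpowers b = ⊤) :
    IsPGroup p G := by
  have hsup := (IsPGroup.of_card ((Nat.card_zpowers a).trans ha)).to_sup_of_normal_left
    (IsPGroup.of_card ((Nat.card_zpowers b).trans hb))
  rw [h] at hsup
  exact hsup.of_equiv topEquiv

end Metacyclic

theorem stmt_15_general (V : Type*) [Fintype V]
    (G : Type*) [Group G] [MulAction G V]
    (hfaithful : ∀ g h : G, (∀ v : V, g • v = h • v) → g = h)
    (htrans : MulAction.IsPretransitive G V)
    (a b : G) (n m : ℕ)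
    (ha : orderOf a = 2 ^ n) (hb : orderOf b = 2 ^ m)
    (hN : (Subgroup.zpowers a).Normal)
    (hgen : Subgroup.zpowers a ⊔ Subgroup.zpowers b = ⊤)
    (hZ : ¬ IsCyclic (Subgroup.center G)) :
    ∀ v : V, MulAction.stabilizer G v = ⊥ := by
  have : FaithfulSMul G V := ⟨hfaithful _ _⟩
  have : Finite G := Finite.of_injective _ (MulAction.toPerm_injective (β := V))
  have : IsCyclic (G ⧸ zpowers a) := isCyclic_quotient_of_sup_zpowers_eq_top hgen
  have h2 : IsPGroup 2 G := .of_sup_zpowers_eq_top ha hb hgen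
  intro v
  refine (eq_bot_iff_forall _).mpr fun g hgv => by_contra fun hg => ?_
  have hs := h2.orderOf_pow_orderOf_div_prime hg
  have hcentral := mem_center_of_orderOf_eq_two_of_not_isCyclic_center (A := zpowers a) h2 hZ hs
  rw [MulAction.eq_one_of_mem_center_of_mem_stabilizer hcentral (pow_mem hgv _), orderOf_one] at hs
  exact absurd hs (by norm_num)

/-- Let `G = ⟨a⟩ ⋊ ⟨b⟩ ≅ C_{2^n} ⋊ C_{2^m}` be a split metacyclic `2`-group acting
faithfully and vertex-transitively by graph automorphisms on a connected graph `Γ`.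
If `Z(G)` is not cyclic, then the action of `G` on the vertices is regular. -/
theorem stmt_15 (V : Type*) [Fintype V] (Γ : SimpleGraph V) (hconn : Γ.Connected)
    (G : Type*) [Group G] [MulAction G V]
    (hfaithful : ∀ g h : G, (∀ v : V, g • v = h • v) → g = h)
    (haut : ∀ (g : G) (u v : V), Γ.Adj u v → Γ.Adj (g • u) (g • v))
    (htrans : MulAction.IsPretransitive G V)
    (a b : G) (n m : ℕ) (hn : 1 ≤ n) (hm : 1 ≤ m)
    (ha : orderOf a = 2 ^ n) (hb : orderOf b = 2 ^ m)
    (hN : (Subgroup.zpowers a).Normal)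
    (hgen : Subgroup.zpowers a ⊔ Subgroup.zpowers b = ⊤)
    (hint : Subgroup.zpowers a ⊓ Subgroup.zpowers b = ⊥)
    (hZ : ¬ IsCyclic (Subgroup.center G)) :
    ∀ v : V, MulAction.stabilizer G v = ⊥ :=
  stmt_15_general V G hfaithful htrans a b n m ha hb hN hgen hZ
end

section
/- Let $G$ be a metabelian group (i.e., $G'' = 1$). Then for any $x, y \in G$ and any integer $\ell \geq 2$, $(xy^{-1})^\ell = x^\ell \left(\prod_{i+j \leq \ell} [ix, jy]^{\binom{\ell}{i+j}}\right) y^{-\ell}$, where $[ix, jy]$ denotes the iterated commutator $[x, y, x, \ldots, x, y, \ldots, y]$ with $i-1$ further occurrences of $x$ and $j-1$ further of $y$, and the product is over pairs $i, j \geq 1$ with $2 \leq i + j \leq \ell$. -/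
/-- The iterated left-normed commutator `[ix, jy] = [x, y, x, …, x, y, …, y]`
(with `i - 1` further occurrences of `x` and `j - 1` further occurrences of `y`),
where `[u, v] = u⁻¹ v⁻¹ u v`. -/
def iterComm {G : Type*} [Group G] (x y : G) (i j : ℕ) : G :=
  (fun c => c⁻¹ * y⁻¹ * c * y)^[j - 1]
    ((fun c => c⁻¹ * x⁻¹ * c * x)^[i - 1] (x⁻¹ * y⁻¹ * x * y))

/-!
On the abelian group `G'` conjugation `σ_g c = g⁻¹ c g` satisfies `σ_g c = c [c, g]`; in additive
language `σ_g = 1 + Δ_g` with `Δ_g c = [c, g]`. Expanding `(x y⁻¹)^(n+1) = x y⁻¹ (x y⁻¹)^n` gives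
`(x y⁻¹)^n = x^n P_n y^(-n)` with `P_(n+1) = [x^n, y] σ_y(P_n)`, and likewise
`[x^(n+1), y] = σ_x([x^n, y]) [x, y]`. Both recursions are solved by Pascal's rule
`C(n+1, k+1) = C(n, k) + C(n, k+1)`, with `Δ` raising the commutator index by one.
-/

open Finset

/-- Pascal's rule in multiplicative form, for `σ = 1 + Δ` and `f b = Δ^b w`. -/
theorem pow_choose_mul_map_prod {A F : Type*} [CommMonoid A] [FunLike F A A]
    [MonoidHomClass F A A] (σ : F) (f : ℕ → A) (hf : ∀ b, σ (f b) = f b * f (b + 1)) (s n : ℕ) :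
    f 0 ^ n.choose s * σ (∏ b ∈ range n, f b ^ n.choose (s + b + 1)) =
      ∏ b ∈ range (n + 1), f b ^ (n + 1).choose (s + b + 1) := by
  have hfirst : ∏ b ∈ range (n + 1), f b ^ n.choose (s + b) =
      f 0 ^ n.choose s * ∏ b ∈ range n, f (b + 1) ^ n.choose (s + b + 1) := by
    rw [prod_range_succ', mul_comm]
    rfl
  have hlast : ∏ b ∈ range (n + 1), f b ^ n.choose (s + b + 1) =
      ∏ b ∈ range n, f b ^ n.choose (s + b + 1) := by
    rw [prod_range_succ, Nat.choose_eq_zero_of_lt (by omega), pow_zero, mul_one]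
  calc f 0 ^ n.choose s * σ (∏ b ∈ range n, f b ^ n.choose (s + b + 1))
      = f 0 ^ n.choose s * ((∏ b ∈ range n, f (b + 1) ^ n.choose (s + b + 1)) *
          ∏ b ∈ range n, f b ^ n.choose (s + b + 1)) := by
        simp only [map_prod, map_pow, hf, mul_pow, prod_mul_distrib, mul_comm]
    _ = (∏ b ∈ range (n + 1), f b ^ n.choose (s + b)) *
          ∏ b ∈ range (n + 1), f b ^ n.choose (s + b + 1) := by
        rw [hfirst, hlast, mul_assoc]
    _ = ∏ b ∈ range (n + 1), f b ^ (n + 1).choose (s + b + 1) := by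
        simp only [← prod_mul_distrib, ← pow_add, Nat.choose_succ_succ]

theorem prod_Icc_one_eq_prod_range {M : Type*} [CommMonoid M] (f : ℕ → M) (n : ℕ) :
    ∏ i ∈ Icc 1 n, f i = ∏ i ∈ range n, f (i + 1) := by
  rw [← Ico_add_one_right_eq_Icc, range_eq_Ico, prod_Ico_add' f 0 n 1, zero_add]

namespace Metabelian

variable {G : Type*} [Group G]

def commRight (g : G) (c : commutator G) : commutator G :=
  c⁻¹ * MulAut.conjNormal g⁻¹ c

lemma coe_commRight (g : G) (c : commutator G) :
    (commRight g c : G) = c⁻¹ * g⁻¹ * c * g := by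
  simp [commRight, mul_assoc]

lemma conjNormal_inv_eq_mul_commRight (g : G) (c : commutator G) :
    MulAut.conjNormal g⁻¹ c = c * commRight g c :=
  (mul_inv_cancel_left c _).symm

lemma coe_iterate_commRight (g : G) (n : ℕ) (c : commutator G) :
    ((commRight g)^[n] c : G) = (fun c => c⁻¹ * g⁻¹ * c * g)^[n] c :=
  Function.Semiconj.iterate_right
    (show Function.Semiconj Subtype.val (commRight g) (fun c : G => c⁻¹ * g⁻¹ * c * g) from
      coe_commRight g) n c

def powComm (x y : G) (n : ℕ) : commutator G :=
  ⟨(x ^ n)⁻¹ * y⁻¹ * x ^ n * y, by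
    rw [commutator_def]
    simpa [commutatorElement_def] using
      Subgroup.commutator_mem_commutator (Subgroup.mem_top (x ^ n)⁻¹) (Subgroup.mem_top y⁻¹)⟩

@[simp]
lemma coe_powComm (x y : G) (n : ℕ) : (powComm x y n : G) = (x ^ n)⁻¹ * y⁻¹ * x ^ n * y := rfl

lemma powComm_zero (x y : G) : powComm x y 0 = 1 := by
  ext; simp

lemma powComm_succ (x y : G) (n : ℕ) :
    powComm x y (n + 1) = MulAut.conjNormal x⁻¹ (powComm x y n) * powComm x y 1 := by
  ext
  push_cast [coe_powComm, MulAut.conjNormal_apply]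
  group

/-- `[(a+1)x, (b+1)y]` as an element of `G'`. -/
def iterCommShift (x y : G) (a b : ℕ) : commutator G :=
  (commRight y)^[b] ((commRight x)^[a] (powComm x y 1))

lemma coe_iterCommShift (x y : G) (i j : ℕ) :
    (iterCommShift x y (i - 1) (j - 1) : G) = iterComm x y i j := by
  rw [iterCommShift, coe_iterate_commRight, coe_iterate_commRight, coe_powComm, pow_one]
  rfl

lemma conjNormal_iterCommShift (x y : G) (a b : ℕ) :
    MulAut.conjNormal y⁻¹ (iterCommShift x y a b) =
      iterCommShift x y a b * iterCommShift x y a (b + 1) := by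
  rw [conjNormal_inv_eq_mul_commRight, iterCommShift, iterCommShift, Function.iterate_succ_apply']

lemma conjNormal_iterCommShift_zero (x y : G) (a : ℕ) :
    MulAut.conjNormal x⁻¹ (iterCommShift x y a 0) =
      iterCommShift x y a 0 * iterCommShift x y (a + 1) 0 := by
  rw [conjNormal_inv_eq_mul_commRight, iterCommShift, iterCommShift, Function.iterate_succ_apply']
  rfl

section

variable [IsMulCommutative (commutator G)]
open scoped IsMulCommutative

lemma powComm_eq_prod (x y : G) (n : ℕ) :
    powComm x y n = ∏ a ∈ range n, iterCommShift x y a 0 ^ n.choose (a + 1) := by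
  induction n with
  | zero => simp [powComm_zero]
  | succ n ih =>
    have hpascal := pow_choose_mul_map_prod (MulAut.conjNormal x⁻¹)
      (fun a => iterCommShift x y a 0) (conjNormal_iterCommShift_zero x y) 0 n
    simp only [zero_add, Nat.choose_zero_right, pow_one] at hpascal
    rw [powComm_succ, ih, ← hpascal, mul_comm]
    rfl

def powCorrection (x y : G) (n : ℕ) : commutator G :=
  ∏ a ∈ range n, ∏ b ∈ range n, iterCommShift x y a b ^ n.choose (a + 1 + b + 1)

lemma powCorrection_succ (x y : G) (n : ℕ) :
    powCorrection x y (n + 1) =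
      powComm x y n * MulAut.conjNormal y⁻¹ (powCorrection x y n) := by
  have hrow (a : ℕ) := pow_choose_mul_map_prod (MulAut.conjNormal y⁻¹)
    (iterCommShift x y a) (conjNormal_iterCommShift x y a) (a + 1) n
  have hlast : ∏ b ∈ range (n + 1), iterCommShift x y n b ^ (n + 1).choose (n + 1 + b + 1) = 1 :=
    prod_eq_one fun b _ => by rw [Nat.choose_eq_zero_of_lt (by omega), pow_zero]
  rw [powCorrection, prod_range_succ, hlast, mul_one, powComm_eq_prod, powCorrection, map_prod,
    ← prod_mul_distrib]
  exact prod_congr rfl fun a _ => (hrow a).symm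

lemma mul_inv_pow_eq (x y : G) (n : ℕ) :
    (x * y⁻¹) ^ n = x ^ n * powCorrection x y n * (y ^ n)⁻¹ := by
  induction n with
  | zero => simp [powCorrection]
  | succ n ih =>
    rw [powCorrection_succ, pow_succ', ih]
    push_cast [coe_powComm, MulAut.conjNormal_apply]
    group

lemma coe_powCorrection (x y : G) (n : ℕ) :
    (powCorrection x y n : G) =
      (((Icc 1 n ×ˢ Icc 1 n).filter (fun p => p.1 + p.2 ≤ n)).toList.map
        (fun p => iterComm x y p.1 p.2 ^ n.choose (p.1 + p.2))).prod := by
  set term : ℕ × ℕ → commutator G :=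
    fun p => iterCommShift x y (p.1 - 1) (p.2 - 1) ^ n.choose (p.1 + p.2)
  have hlift : (fun p : ℕ × ℕ => iterComm x y p.1 p.2 ^ n.choose (p.1 + p.2)) =
      Subtype.val ∘ term := by
    funext p
    simp [term, coe_iterCommShift]
  have hfilter : ∀ p ∈ Icc 1 n ×ˢ Icc 1 n, term p ≠ 1 → p.1 + p.2 ≤ n := fun p _ hp => by
    contrapose! hp
    simp only [term, Nat.choose_eq_zero_of_lt hp, pow_zero]
  rw [hlift, ← List.map_map, ← Subgroup.val_list_prod, prod_map_toList, prod_filter_of_ne hfilter,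
    prod_product, prod_Icc_one_eq_prod_range, powCorrection]
  refine congrArg Subtype.val (prod_congr rfl fun a _ => ?_)
  rw [prod_Icc_one_eq_prod_range]
  simp only [term, add_tsub_cancel_right, add_assoc]

end

end Metabelian

theorem stmt_19_general (G : Type*) [Group G] (hmeta : IsMulCommutative (commutator G))
    (x y : G) (ℓ : ℕ) :
    (x * y⁻¹) ^ ℓ =
      x ^ ℓ *
        (((Finset.Icc 1 ℓ ×ˢ Finset.Icc 1 ℓ).filter
              (fun p => p.1 + p.2 ≤ ℓ)).toList.map
            (fun p => iterComm x y p.1 p.2 ^ ℓ.choose (p.1 + p.2))).prod *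
        (y ^ ℓ)⁻¹ := by
  have := hmeta
  rw [Metabelian.mul_inv_pow_eq, Metabelian.coe_powCorrection]

/-- (Xu) In a metabelian group `G`, for any `x, y ∈ G` and `ℓ ≥ 2`:
`(x y⁻¹)^ℓ = x^ℓ (∏_{i+j ≤ ℓ} [ix, jy]^(C(ℓ, i+j))) y^(-ℓ)`, the product being over
pairs `i, j ≥ 1` with `i + j ≤ ℓ` (the factors all lie in the abelian group `G'`,
so the order of multiplication is irrelevant). -/
theorem stmt_19 (G : Type*) [Group G] (hmeta : IsMulCommutative (commutator G))
    (x y : G) (ℓ : ℕ) (hℓ : 2 ≤ ℓ) :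
    (x * y⁻¹) ^ ℓ =
      x ^ ℓ *
        (((Finset.Icc 1 ℓ ×ˢ Finset.Icc 1 ℓ).filter
              (fun p => p.1 + p.2 ≤ ℓ)).toList.map
            (fun p => iterComm x y p.1 p.2 ^ ℓ.choose (p.1 + p.2))).prod *
        (y ^ ℓ)⁻¹ :=
  stmt_19_general G hmeta x y ℓ
end
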